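/- arXiv:2304.03470 — 4 statements merged into one kernel-verified Lean document; each statement's English description precedes it below -/
import Mathlib

section
/- Let T > 0 and let g : ℝ → ℝ be continuous on [0,T] and extended to all of ℝ by setting g(t) = g(0) for t < 0 and g(t) = g(T) for t > T. Fix δ ∈ (0,T) and suppose there exist an integrable function ρ ∈ L¹((0, T−δ); ℝ) and a constant h₀ > 0 such that for almost every t ∈ [0, T−δ) and every h ∈ (0, h₀], (g(t+h) − g(t))/h ≤ ρ(t). Then the extended-real-valued function D⁺g(t) := limsup_{h→0⁺} (g(t+h) − g(t))/h is bounded above by ρ(t) for almost every t ∈ [0, T−δ), and for all 0 ≤ α < β ≤ T−δ one has g(β) − g(α) ≤ ∫_α^β D⁺g(t) dt, where the integral is the (upper) Lebesgue integral of D⁺g, well defined with values in [−∞, +∞). -/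
open Filter Topology MeasureTheory Set

/-- The one-sided upper Dini-type derivative `D⁺g(t) = limsup_{h→0⁺} (g(t+h)-g(t))/h`,
taking values in the extended reals. -/
noncomputable def upperRightDini (g : ℝ → ℝ) (t : ℝ) : EReal :=
  Filter.limsup (fun h : ℝ => (((g (t + h) - g t) / h : ℝ) : EReal)) (𝓝[>] (0 : ℝ))

/-- The upper Lebesgue integral (over the set `s`) of an extended-real-valued function `f`:
the infimum of the integrals of integrable real-valued functions dominating `f` a.e. on `s`. -/
noncomputable def upperIntegral (f : ℝ → EReal) (s : Set ℝ) : EReal :=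
  sInf {I : EReal | ∃ φ : ℝ → ℝ, MeasureTheory.IntegrableOn φ s ∧
    (∀ᵐ t ∂(MeasureTheory.volume.restrict s), f t ≤ ((φ t : ℝ) : EReal)) ∧
    I = ((∫ t in s, φ t : ℝ) : EReal)}

/-!
The difference quotients `q_h(t) = (g(t+h) - g(t))/h` of a continuous `g` satisfy
`∫_α^β q_h = ⨍_β^{β+h} g - ⨍_α^{α+h} g → g(β) - g(α)` as `h → 0⁺`. If `D⁺g ≤ φ` a.e. then
`max q_h φ → φ` a.e., and the integrable bound `q_h ≤ ρ` lets dominated convergence give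
`∫ max q_h φ → ∫ φ`; comparing the two limits yields `g(β) - g(α) ≤ ∫_α^β φ` for every
integrable majorant `φ` of `D⁺g`, i.e. `g(β) - g(α)` is below the upper integral of `D⁺g`.
-/

lemma continuous_of_continuousOn_Icc_of_const {T : ℝ} (hT : 0 ≤ T) {g : ℝ → ℝ}
    (hg : ContinuousOn g (Icc 0 T))
    (hg0 : ∀ t, t < 0 → g t = g 0) (hgT : ∀ t, T < t → g t = g T) :
    Continuous g := by
  have hproj : g = g ∘ (fun t => (projIcc 0 T hT t : ℝ)) := by
    funext t
    rcases lt_or_ge t 0 with ht0 | ht0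
    · simp [projIcc_of_le_left hT ht0.le, hg0 t ht0]
    rcases le_or_gt t T with htT | htT
    · simp [projIcc_of_mem hT ⟨ht0, htT⟩]
    · simp [projIcc_of_right_le hT htT.le, hgT t htT]
  rw [hproj]
  exact hg.comp_continuous (continuous_subtype_val.comp continuous_projIcc) fun t => Subtype.mem _

lemma upperRightDini_le_of_div_le {g : ℝ → ℝ} {t c h₀ : ℝ} (hh₀ : 0 < h₀)
    (hq : ∀ h, 0 < h → h ≤ h₀ → (g (t + h) - g t) / h ≤ c) :
    upperRightDini g t ≤ (c : EReal) := by
  refine limsup_le_of_le (by isBoundedDefault) ?_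
  filter_upwards [Ioc_mem_nhdsGT hh₀] with h hh
  exact_mod_cast hq h hh.1 hh.2

lemma tendsto_max_of_limsup_le {ι : Type*} {l : Filter ι} {f : ι → ℝ} {c : ℝ}
    (h : limsup (fun i => (f i : EReal)) l ≤ c) :
    Tendsto (fun i => max (f i) c) l (𝓝 c) := by
  refine tendsto_order.2 ⟨fun a ha => Eventually.of_forall fun i => ha.trans_le (le_max_right _ _),
    fun a ha => ?_⟩
  filter_upwards [eventually_lt_of_limsup_lt (h.trans_lt (EReal.coe_lt_coe_iff.2 ha))] with i hi
  exact max_lt (EReal.coe_lt_coe_iff.1 hi) ha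

lemma tendsto_integral_div_right_nhdsGT {g : ℝ → ℝ} (hg : Continuous g) (x : ℝ) :
    Tendsto (fun h => (∫ t in x..x + h, g t) / h) (𝓝[>] 0) (𝓝 (g x)) := by
  simpa [div_eq_inv_mul] using
    ((hg.integral_hasStrictDerivAt x x).hasDerivAt).tendsto_slope_zero_right

lemma integral_div_sub_eq {g : ℝ → ℝ} (hg : Continuous g) (a b h : ℝ) :
    ∫ t in a..b, (g (t + h) - g t) / h =
      (∫ t in b..b + h, g t) / h - (∫ t in a..a + h, g t) / h := by
  have hgi : ∀ x y : ℝ, IntervalIntegrable g volume x y := hg.intervalIntegrable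
  have hshift : IntervalIntegrable (fun t => g (t + h)) volume a b :=
    (hg.comp (continuous_add_const h)).intervalIntegrable a b
  rw [intervalIntegral.integral_div, intervalIntegral.integral_sub hshift (hgi a b),
    intervalIntegral.integral_comp_add_right, ← sub_div,
    intervalIntegral.integral_interval_sub_interval_comm' (hgi _ _) (hgi _ _) (hgi _ _)]

lemma tendsto_integral_div_sub {g : ℝ → ℝ} (hg : Continuous g) (a b : ℝ) :
    Tendsto (fun h => ∫ t in a..b, (g (t + h) - g t) / h) (𝓝[>] 0) (𝓝 (g b - g a)) := by
  simpa only [integral_div_sub_eq hg] using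
    (tendsto_integral_div_right_nhdsGT hg b).sub (tendsto_integral_div_right_nhdsGT hg a)

lemma sub_le_integral_of_upperRightDini_le {g ρ φ : ℝ → ℝ} {a b h₀ : ℝ} (hab : a ≤ b)
    (hh₀ : 0 < h₀) (hg : Continuous g)
    (hρ : IntegrableOn ρ (Ioc a b)) (hφ : IntegrableOn φ (Ioc a b))
    (hq : ∀ᵐ t ∂(volume.restrict (Ioc a b)),
      ∀ h, 0 < h → h ≤ h₀ → (g (t + h) - g t) / h ≤ ρ t)
    (hD : ∀ᵐ t ∂(volume.restrict (Ioc a b)), upperRightDini g t ≤ (φ t : EReal)) :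
    g b - g a ≤ ∫ t in Ioc a b, φ t := by
  set q : ℝ → ℝ → ℝ := fun h t => (g (t + h) - g t) / h
  have hq_cont (h : ℝ) : Continuous (q h) :=
    ((hg.comp (continuous_add_const h)).sub hg).div_const h
  have hlim_q : Tendsto (fun h => ∫ t in Ioc a b, q h t) (𝓝[>] 0) (𝓝 (g b - g a)) := by
    simpa only [intervalIntegral.integral_of_le hab] using tendsto_integral_div_sub hg a b
  have hlim_max : Tendsto (fun h => ∫ t in Ioc a b, max (q h t) (φ t)) (𝓝[>] 0)
      (𝓝 (∫ t in Ioc a b, φ t)) := by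
    refine tendsto_integral_filter_of_dominated_convergence (fun t => |ρ t| + |φ t|)
      (Eventually.of_forall fun h => (hq_cont h).aestronglyMeasurable.sup
        hφ.aestronglyMeasurable) ?_ (hρ.abs.add hφ.abs) ?_
    · filter_upwards [Ioc_mem_nhdsGT hh₀] with h hh
      filter_upwards [hq] with t ht
      have hqρ := ht h hh.1 hh.2
      rw [Real.norm_eq_abs, abs_le]
      constructor
      · linarith [neg_abs_le (φ t), abs_nonneg (ρ t), le_max_right (q h t) (φ t)]
      · exact max_le (by linarith [le_abs_self (ρ t), abs_nonneg (φ t)])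
          (by linarith [le_abs_self (φ t), abs_nonneg (ρ t)])
    · filter_upwards [hD] with t ht
      exact tendsto_max_of_limsup_le ht
  refine le_of_tendsto_of_tendsto hlim_q hlim_max (Eventually.of_forall fun h => ?_)
  exact integral_mono ((hq_cont h).integrableOn_Ioc) ((hq_cont h).integrableOn_Ioc.sup hφ)
    fun t => le_max_left _ _

theorem stmt0_general (T δ h₀ : ℝ) (hT : 0 < T) (hh₀ : 0 < h₀)
    (g ρ : ℝ → ℝ)
    (hg : ContinuousOn g (Set.Icc 0 T))
    (hg0 : ∀ t : ℝ, t < 0 → g t = g 0) (hgT : ∀ t : ℝ, T < t → g t = g T)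
    (hρ : MeasureTheory.IntegrableOn ρ (Set.Ioo 0 (T - δ)))
    (hbound : ∀ᵐ t ∂(MeasureTheory.volume.restrict (Set.Ico 0 (T - δ))),
      ∀ h : ℝ, 0 < h → h ≤ h₀ → (g (t + h) - g t) / h ≤ ρ t) :
    (∀ᵐ t ∂(MeasureTheory.volume.restrict (Set.Ico 0 (T - δ))),
        upperRightDini g t ≤ ((ρ t : ℝ) : EReal)) ∧
    (∀ α β : ℝ, 0 ≤ α → α < β → β ≤ T - δ →
      ((g β - g α : ℝ) : EReal) ≤ upperIntegral (upperRightDini g) (Set.Ioc α β)) := by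
  refine ⟨hbound.mono fun t ht => upperRightDini_le_of_div_le hh₀ ht,
    fun α β hα hαβ hβ => le_sInf ?_⟩
  rintro _ ⟨φ, hφ, hDφ, rfl⟩
  have hρ' : IntegrableOn ρ (Ioc α β) :=
    (integrableOn_Ioc_iff_integrableOn_Ioo).mpr (hρ.mono_set (Ioo_subset_Ioo hα hβ))
  have hbound' := ae_restrict_of_ae_restrict_of_subset
    (Ioc_subset_Icc_self.trans (Icc_subset_Icc hα hβ))
    ((ae_restrict_congr_set Ico_ae_eq_Icc).1 hbound)
  exact_mod_cast sub_le_integral_of_upperRightDini_le hαβ.le hh₀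
    (continuous_of_continuousOn_Icc_of_const hT.le hg hg0 hgT) hρ' hφ hbound' hDφ

theorem stmt0 (T δ h₀ : ℝ) (hT : 0 < T) (hδ : δ ∈ Set.Ioo 0 T) (hh₀ : 0 < h₀)
    (g ρ : ℝ → ℝ)
    (hg : ContinuousOn g (Set.Icc 0 T))
    (hg0 : ∀ t : ℝ, t < 0 → g t = g 0) (hgT : ∀ t : ℝ, T < t → g t = g T)
    (hρ : MeasureTheory.IntegrableOn ρ (Set.Ioo 0 (T - δ)))
    (hbound : ∀ᵐ t ∂(MeasureTheory.volume.restrict (Set.Ico 0 (T - δ))),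
      ∀ h : ℝ, 0 < h → h ≤ h₀ → (g (t + h) - g t) / h ≤ ρ t) :
    (∀ᵐ t ∂(MeasureTheory.volume.restrict (Set.Ico 0 (T - δ))),
        upperRightDini g t ≤ ((ρ t : ℝ) : EReal)) ∧
    (∀ α β : ℝ, 0 ≤ α → α < β → β ≤ T - δ →
      ((g β - g α : ℝ) : EReal) ≤ upperIntegral (upperRightDini g) (Set.Ioc α β)) :=
  stmt0_general T δ h₀ hT hh₀ g ρ hg hg0 hgT hρ hbound
end

section
/- Let n ≥ 1, T > 0, let w : [0,T] × ℝⁿ → ℝ be continuous, and let (t₀,x₀) ∈ [0,T) × ℝⁿ. Then (q,p,P) ∈ D^{1,2,+}_{t+,x} w(t₀,x₀) if and only if there exists a function φ : [0,T] × ℝⁿ → ℝ of class C^{1,2} (i.e. φ is continuous and the partial derivative ∂_tφ, the spatial gradient ∂_xφ and the spatial Hessian ∂²_{xx}φ exist and are continuous on [0,T] × ℝⁿ) such that φ(t,x) > w(t,x) for every (t,x) ∈ [t₀,T] × ℝⁿ with (t,x) ≠ (t₀,x₀), and φ(t₀,x₀) = w(t₀,x₀), ∂_tφ(t₀,x₀)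 = q, ∂_xφ(t₀,x₀) = p, ∂²_{xx}φ(t₀,x₀) = P. -/
open Filter Topology Set
open scoped RealInnerProductSpace

noncomputable section

abbrev En (n : ℕ) := EuclideanSpace ℝ (Fin n)

/-- The difference quotient appearing in the definition of second-order parabolic
super/subdifferentials. -/
noncomputable def parabolicQuot {n : ℕ} (w : ℝ → En n → ℝ) (t : ℝ) (x : En n)
    (q : ℝ) (p : En n) (P : Matrix (Fin n) (Fin n) ℝ) (sy : ℝ × En n) : ℝ :=
  (w sy.1 sy.2 - w t x - q * (sy.1 - t) - ⟪p, sy.2 - x⟫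
      - (1 / 2) * ⟪(Matrix.toEuclideanLin P) (sy.2 - x), sy.2 - x⟫)
    / (|sy.1 - t| + ‖sy.2 - x‖ ^ 2)

/-- The second-order right parabolic superdifferential `D^{1,2,+}_{t+,x} w(t,x)`:
triples `(q,p,P) ∈ ℝ × ℝⁿ × Sⁿ` whose associated difference quotient has
`limsup ≤ 0` as `(s,y) → (t,x)` with `s ∈ [t,T]`, `(s,y) ≠ (t,x)`. -/
noncomputable def parabolicSuperdiff {n : ℕ} (T : ℝ) (w : ℝ → En n → ℝ)
    (t : ℝ) (x : En n) : Set (ℝ × En n × Matrix (Fin n) (Fin n) ℝ) :=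
  {qpP | qpP.2.2.IsSymm ∧
    Filter.limsup
      (fun sy : ℝ × En n => ((parabolicQuot w t x qpP.1 qpP.2.1 qpP.2.2 sy : ℝ) : EReal))
      (𝓝[(Set.Icc t T ×ˢ (Set.univ : Set (En n))) \ {(t, x)}] (t, x)) ≤ 0}

/-- The second-order right parabolic subdifferential `D^{1,2,-}_{t+,x} w(t,x)`. -/
noncomputable def parabolicSubdiff {n : ℕ} (T : ℝ) (w : ℝ → En n → ℝ)
    (t : ℝ) (x : En n) : Set (ℝ × En n × Matrix (Fin n) (Fin n) ℝ) :=
  {qpP | qpP.2.2.IsSymm ∧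
    (0 : EReal) ≤ Filter.liminf
      (fun sy : ℝ × En n => ((parabolicQuot w t x qpP.1 qpP.2.1 qpP.2.2 sy : ℝ) : EReal))
      (𝓝[(Set.Icc t T ×ˢ (Set.univ : Set (En n))) \ {(t, x)}] (t, x))}

/-- `φ : [0,T] × ℝⁿ → ℝ` is of class `C^{1,2}`, with time derivative `φt`, spatial
gradient `φx` and spatial Hessian `φxx`, all existing and continuous on `[0,T] × ℝⁿ`. -/
structure IsC12 {n : ℕ} (T : ℝ) (φ : ℝ → En n → ℝ) (φt : ℝ → En n → ℝ)
    (φx : ℝ → En n → En n) (φxx : ℝ → En n → Matrix (Fin n) (Fin n) ℝ) : Prop where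
  cont : ContinuousOn (fun p : ℝ × En n => φ p.1 p.2) (Set.Icc 0 T ×ˢ Set.univ)
  hasDerivT : ∀ t ∈ Set.Icc 0 T, ∀ x : En n,
    HasDerivWithinAt (fun s => φ s x) (φt t x) (Set.Icc 0 T) t
  hasGradX : ∀ t ∈ Set.Icc 0 T, ∀ x : En n, HasGradientAt (φ t) (φx t x) x
  hasHessXX : ∀ t ∈ Set.Icc 0 T, ∀ x : En n,
    HasFDerivAt (φx t) ((Matrix.toEuclideanLin (φxx t x)).toContinuousLinearMap) x
  contT : ContinuousOn (fun p : ℝ × En n => φt p.1 p.2) (Set.Icc 0 T ×ˢ Set.univ)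
  contX : ContinuousOn (fun p : ℝ × En n => φx p.1 p.2) (Set.Icc 0 T ×ˢ Set.univ)
  contXX : ContinuousOn (fun p : ℝ × En n => φxx p.1 p.2) (Set.Icc 0 T ×ˢ Set.univ)


namespace Stmt1Aux
open intervalIntegral MeasureTheory



/-- A "modulus": nondecreasing, nonnegative, vanishing on nonpositives, tending to 0 at 0. -/
structure GoodMod (f : ℝ → ℝ) : Prop where
  mono : Monotone f
  nonneg : ∀ r, 0 ≤ f r
  zero : ∀ r ≤ 0, f r = 0
  tend : Filter.Tendsto f (𝓝 0) (𝓝 0)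

def Fp (f : ℝ → ℝ) (x : ℝ) : ℝ := ∫ u in (0:ℝ)..x, f u

def Av (f : ℝ → ℝ) (r : ℝ) : ℝ := (2*r)⁻¹ * (Fp f (4*r) - Fp f (2*r))

def dAv (f : ℝ → ℝ) (r : ℝ) : ℝ := r⁻¹ * (2 * f (4*r) - f (2*r) - Av f r)

variable {f : ℝ → ℝ}

lemma GoodMod.intInt (hf : Monotone f) (a b : ℝ) : IntervalIntegrable f volume a b :=
  (hf.monotoneOn _).intervalIntegrable

lemma Fp_sub (hf : Monotone f) (a b : ℝ) :
    Fp f b - Fp f a = ∫ u in a..b, f u := by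
  have h := integral_add_adjacent_intervals (GoodMod.intInt hf 0 a) (GoodMod.intInt hf a b)
  simp only [Fp]
  linarith [h]

lemma Av_eq (hf : Monotone f) (r : ℝ) :
    Av f r = (2*r)⁻¹ * ∫ u in (2*r)..(4*r), f u := by
  rw [Av, Fp_sub hf]

lemma Av_eq_scaled (hf : Monotone f) {r : ℝ} (hr : 0 < r) :
    Av f r = ∫ s in (1:ℝ)..2, f (2*r*s) := by
  rw [intervalIntegral.integral_comp_mul_left f (by positivity : (2*r) ≠ 0)]
  rw [Av_eq hf]
  rw [smul_eq_mul]
  ring_nf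

lemma Av_of_nonpos (hf : GoodMod f) {r : ℝ} (hr : r ≤ 0) : Av f r = 0 := by
  rw [Av_eq hf.mono]
  have : ∫ u in (2*r)..(4*r), f u = ∫ u in (2*r)..(4*r), (0:ℝ) := by
    apply intervalIntegral.integral_congr
    intro u hu
    apply hf.zero
    rcases le_total (2*r) (4*r) with h | h
    · rw [uIcc_of_le h] at hu; nlinarith [hu.2]
    · rw [uIcc_of_ge h] at hu; nlinarith [hu.2]
  rw [this]; simp

lemma Av_nonneg (hf : GoodMod f) (r : ℝ) : 0 ≤ Av f r := by
  rcases le_or_gt r 0 with hr | hr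
  · rw [Av_of_nonpos hf hr]
  · rw [Av_eq hf.mono]
    have : 0 ≤ ∫ u in (2*r)..(4*r), f u :=
      intervalIntegral.integral_nonneg (by linarith) (fun u _ => hf.nonneg u)
    positivity

lemma intInt_scaled (hf : Monotone f) {r : ℝ} (hr : 0 ≤ r) (a b : ℝ) :
    IntervalIntegrable (fun s => f (2*r*s)) volume a b := by
  apply MonotoneOn.intervalIntegrable
  intro x _ y _ hxy
  exact hf (by nlinarith)

lemma Av_mono (hf : GoodMod f) : Monotone (Av f) := by
  intro r r' h
  rcases le_or_gt r 0 with hr | hr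
  · rw [Av_of_nonpos hf hr]; exact Av_nonneg hf r'
  · have hr' : 0 < r' := lt_of_lt_of_le hr h
    rw [Av_eq_scaled hf.mono hr, Av_eq_scaled hf.mono hr']
    apply intervalIntegral.integral_mono_on (by norm_num)
      (intInt_scaled hf.mono hr.le 1 2) (intInt_scaled hf.mono hr'.le 1 2)
    intro s hs
    exact hf.mono (by nlinarith [hs.1])

lemma le_Av (hf : GoodMod f) {r : ℝ} (hr : 0 < r) : f (2*r) ≤ Av f r := by
  rw [Av_eq_scaled hf.mono hr]
  have : f (2*r) = ∫ s in (1:ℝ)..2, f (2*r) := by simp; ring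
  rw [this]
  apply intervalIntegral.integral_mono_on (by norm_num)
    (intervalIntegrable_const) (intInt_scaled hf.mono hr.le 1 2)
  intro s hs
  exact hf.mono (by nlinarith [hs.1])

lemma Av_le (hf : GoodMod f) {r : ℝ} (hr : 0 < r) : Av f r ≤ f (4*r) := by
  rw [Av_eq_scaled hf.mono hr]
  have : f (4*r) = ∫ s in (1:ℝ)..2, f (4*r) := by simp; ring
  rw [this]
  apply intervalIntegral.integral_mono_on (by norm_num)
    (intInt_scaled hf.mono hr.le 1 2) (intervalIntegrable_const)
  intro s hs
  exact hf.mono (by nlinarith [hs.2])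

lemma Fp_continuous (hf : Monotone f) : Continuous (Fp f) :=
  intervalIntegral.continuous_primitive (fun a b => GoodMod.intInt hf a b) 0

lemma Av_continuous (hf : GoodMod f) : Continuous (Av f) := by
  rw [continuous_iff_continuousAt]
  intro r₀
  rcases eq_or_ne r₀ 0 with rfl | hr₀
  · -- squeeze at 0
    have hbd : ∀ r : ℝ, ‖Av f r‖ ≤ f (4 * |r|) := by
      intro r
      rcases le_or_gt r 0 with hr | hr
      · rw [Av_of_nonpos hf hr]; simpa using hf.nonneg _
      · rw [Real.norm_eq_abs, abs_of_nonneg (Av_nonneg hf r), abs_of_pos hr]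
        exact Av_le hf hr
    have htend : Tendsto (fun r : ℝ => f (4 * |r|)) (𝓝 0) (𝓝 0) := by
      have h1 : Tendsto (fun r : ℝ => 4 * |r|) (𝓝 0) (𝓝 0) := by
        have hc : Continuous (fun r : ℝ => 4 * |r|) := continuous_const.mul continuous_abs
        have := hc.tendsto (0:ℝ)
        simpa using this
      exact hf.tend.comp h1
    have h0 : Av f 0 = 0 := Av_of_nonpos hf le_rfl
    unfold ContinuousAt
    rw [h0]
    exact squeeze_zero_norm hbd htend
  · apply ContinuousAt.mul
    · exact (continuousAt_inv₀ (by simpa using hr₀)).comp (by fun_prop)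
    · apply ContinuousAt.sub
      · exact ((Fp_continuous hf.mono).continuousAt).comp (by fun_prop)
      · exact ((Fp_continuous hf.mono).continuousAt).comp (by fun_prop)

lemma Av_good (hf : GoodMod f) : GoodMod (Av f) where
  mono := Av_mono hf
  nonneg := Av_nonneg hf
  zero := fun r hr => Av_of_nonpos hf hr
  tend := by
    have := (Av_continuous hf).tendsto 0
    rwa [Av_of_nonpos hf le_rfl] at this

lemma hasDerivAt_Fp (hfc : Continuous f) (hm : Monotone f) (x : ℝ) :
    HasDerivAt (Fp f) (f x) x := by
  apply intervalIntegral.integral_hasDerivAt_right (GoodMod.intInt hm 0 x)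
    (hfc.stronglyMeasurable.stronglyMeasurableAtFilter) hfc.continuousAt

lemma hasDerivAt_Av (hf : GoodMod f) (hfc : Continuous f) {r : ℝ} (hr : 0 < r) :
    HasDerivAt (Av f) (dAv f r) r := by
  have h4 : HasDerivAt (fun r : ℝ => Fp f (4*r)) (4 * f (4*r)) r := by
    have := (hasDerivAt_Fp hfc hf.mono (4*r)).comp r ((hasDerivAt_id r).const_mul 4)
    simp only [Function.comp_def] at this
    refine this.congr_deriv ?_; ring
  have h2 : HasDerivAt (fun r : ℝ => Fp f (2*r)) (2 * f (2*r)) r := by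
    have := (hasDerivAt_Fp hfc hf.mono (2*r)).comp r ((hasDerivAt_id r).const_mul 2)
    simp only [Function.comp_def] at this
    refine this.congr_deriv ?_; ring
  have hinv : HasDerivAt (fun r : ℝ => (2*r)⁻¹) (-2 / (2*r)^2) r := by
    have h := ((hasDerivAt_id r).const_mul 2).inv (by positivity)
    simpa [Pi.inv_def] using h
  have := hinv.mul (h4.sub h2)
  have heq : HasDerivAt (Av f)
      (-2 / (2*r)^2 * (Fp f (4*r) - Fp f (2*r)) + (2*r)⁻¹ * (4 * f (4*r) - 2 * f (2*r))) r := this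
  convert heq using 1
  have hAv : Fp f (4*r) - Fp f (2*r) = (2*r) * Av f r := by
    rw [Av]; field_simp
  rw [dAv, hAv]
  field_simp
  ring

lemma abs_dAv_mul_le (hf : GoodMod f) {r : ℝ} (hr : 0 < r) :
    |dAv f r * r| ≤ 4 * f (4*r) := by
  rw [dAv]
  have h1 : r⁻¹ * (2 * f (4*r) - f (2*r) - Av f r) * r = 2 * f (4*r) - f (2*r) - Av f r := by
    field_simp
  rw [h1, abs_le]
  have h2 : f (2*r) ≤ f (4*r) := hf.mono (by linarith)
  have h3 : Av f r ≤ f (4*r) := Av_le hf hr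
  have h4 := hf.nonneg (2*r)
  have h5 := hf.nonneg (4*r)
  have h6 := Av_nonneg hf r
  constructor <;> nlinarith

lemma dAv_continuousOn (hf : GoodMod f) (hfc : Continuous f) :
    ContinuousOn (dAv f) (Set.Ioi 0) := by
  apply ContinuousOn.mul
  · exact (continuousOn_inv₀.mono (by intro x hx; simp at hx ⊢; linarith))
  · apply ContinuousOn.sub
    apply ContinuousOn.sub
    · exact ((continuous_const.mul (hfc.comp ((continuous_const (y := (4:ℝ))).mul continuous_id)))).continuousOn
    · exact (hfc.comp ((continuous_const (y := (2:ℝ))).mul continuous_id)).continuousOn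
    · exact (Av_continuous hf).continuousOn



variable {f : ℝ → ℝ}

/-- The once-smoothed derivative-level modulus. -/
def kk (f : ℝ → ℝ) (σ : ℝ) : ℝ := 2 * Av (Av f) (2*σ)

/-- Derivative of `kk` (valid on `(0,∞)`). -/
def kdd (f : ℝ → ℝ) (σ : ℝ) : ℝ := 4 * dAv (Av f) (2*σ)

/-- `kdd` patched with 0 at nonpositive arguments. -/
def kdp (f : ℝ → ℝ) (σ : ℝ) : ℝ := if 0 < σ then kdd f σ else 0

/-- The C¹ modulus used to build the test function. -/
def hh (f : ℝ → ℝ) (ρ : ℝ) : ℝ := Fp (kk f) ρ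

lemma kk_cont (hf : GoodMod f) : Continuous (kk f) :=
  continuous_const.mul ((Av_continuous (Av_good hf)).comp (continuous_const.mul continuous_id))

lemma kk_good (hf : GoodMod f) : GoodMod (kk f) where
  mono := fun a b hab => by
    have := Av_mono (Av_good hf) (by linarith : 2*a ≤ 2*b)
    unfold kk; linarith
  nonneg := fun σ => by
    have := Av_nonneg (Av_good hf) (2*σ); unfold kk; linarith
  zero := fun σ hσ => by
    unfold kk; rw [Av_of_nonpos (Av_good hf) (by linarith)]; ring
  tend := by
    have := (kk_cont hf).tendsto 0
    have h0 : kk f 0 = 0 := by unfold kk; rw [Av_of_nonpos (Av_good hf) (by norm_num)]; ring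
    rwa [h0] at this

lemma kk_hasDeriv (hf : GoodMod f) {σ : ℝ} (hσ : 0 < σ) :
    HasDerivAt (kk f) (kdd f σ) σ := by
  have h := (hasDerivAt_Av (Av_good hf) (Av_continuous hf) (by linarith : (0:ℝ) < 2*σ)).comp σ
    ((hasDerivAt_id σ).const_mul 2)
  simp only [Function.comp_def] at h
  have := h.const_mul 2
  refine this.congr_deriv ?_
  unfold kdd; ring

lemma kdd_contOn (hf : GoodMod f) : ContinuousOn (kdd f) (Set.Ioi 0) := by
  have hc : ContinuousOn (fun σ : ℝ => dAv (Av f) (2*σ)) (Set.Ioi 0) :=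
    (dAv_continuousOn (Av_good hf) (Av_continuous hf)).comp
      (continuous_const.mul continuous_id).continuousOn
      (by intro x hx; simp at hx ⊢; linarith)
  exact continuousOn_const.mul hc

lemma kdd_mul_bound (hf : GoodMod f) {σ : ℝ} (hσ : 0 < σ) :
    |kdd f σ * σ| ≤ 8 * Av f (8*σ) := by
  have h := abs_dAv_mul_le (Av_good hf) (by linarith : (0:ℝ) < 2*σ)
  have h1 : kdd f σ * σ = 2 * (dAv (Av f) (2*σ) * (2*σ)) := by unfold kdd; ring
  rw [h1, abs_mul, abs_of_nonneg (by norm_num : (0:ℝ) ≤ 2)]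
  have h2 : (4:ℝ) * (2*σ) = 8*σ := by ring
  rw [h2] at h
  linarith [abs_nonneg (dAv (Av f) (2*σ) * (2*σ))]

lemma kdp_mul_cont (hf : GoodMod f) : Continuous (fun σ => kdp f σ * σ) := by
  rw [continuous_iff_continuousAt]
  intro σ₀
  rcases lt_trichotomy σ₀ 0 with h | rfl | h
  · have : ∀ᶠ σ in 𝓝 σ₀, kdp f σ * σ = 0 := by
      filter_upwards [eventually_lt_nhds h] with σ hσ
      simp [kdp, not_lt.mpr hσ.le]
    exact (continuousAt_const (y := (0:ℝ))).congr (by filter_upwards [this] with σ hσ; simp [hσ])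
  · have hbd : ∀ σ : ℝ, ‖kdp f σ * σ‖ ≤ 8 * Av f (8 * |σ|) := by
      intro σ
      rcases lt_or_ge 0 σ with hσ | hσ
      · rw [kdp, if_pos hσ, Real.norm_eq_abs, abs_of_pos hσ]
        exact kdd_mul_bound hf hσ
      · have h8 : (0:ℝ) ≤ 8 * Av f (8 * |σ|) := by
          have := Av_nonneg hf (8 * |σ|); linarith
        simpa [kdp, not_lt.mpr hσ] using h8
    have htend : Tendsto (fun σ : ℝ => 8 * Av f (8 * |σ|)) (𝓝 0) (𝓝 0) := by
      have hc : Continuous (fun σ : ℝ => 8 * Av f (8 * |σ|)) :=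
        continuous_const.mul ((Av_continuous hf).comp (continuous_const.mul continuous_abs))
      have := hc.tendsto 0
      simpa [Av_of_nonpos hf le_rfl] using this
    have := squeeze_zero_norm hbd htend
    unfold ContinuousAt
    simpa using this
  · have hev : ∀ᶠ σ in 𝓝 σ₀, kdp f σ * σ = kdd f σ * σ := by
      filter_upwards [eventually_gt_nhds h] with σ hσ
      simp [kdp, hσ]
    apply ContinuousAt.congr _ (by filter_upwards [hev] with σ hσ; rw [hσ])
    exact ContinuousAt.mul (((kdd_contOn hf).continuousAt (Ioi_mem_nhds h))) continuousAt_id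

lemma hh_hasDeriv (hf : GoodMod f) (ρ : ℝ) : HasDerivAt (hh f) (kk f ρ) ρ :=
  hasDerivAt_Fp (kk_cont hf) (kk_good hf).mono ρ

lemma hh_cont (hf : GoodMod f) : Continuous (hh f) := Fp_continuous (kk_good hf).mono

lemma hh_zero (hf : GoodMod f) {ρ : ℝ} (h : ρ ≤ 0) : hh f ρ = 0 := by
  rw [hh, Fp]
  have heq : ∫ u in (0:ℝ)..ρ, kk f u = ∫ u in (0:ℝ)..ρ, (0:ℝ) := by
    apply intervalIntegral.integral_congr
    intro u hu
    rw [uIcc_of_ge h] at hu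
    exact (kk_good hf).zero u hu.2
  simp [heq]

lemma hh_nonneg (hf : GoodMod f) (ρ : ℝ) : 0 ≤ hh f ρ := by
  rcases le_or_gt ρ 0 with h | h
  · rw [hh_zero hf h]
  · exact intervalIntegral.integral_nonneg h.le (fun u _ => (kk_good hf).nonneg u)

lemma hh_ge (hf : GoodMod f) {ρ : ℝ} (hρ : 0 ≤ ρ) : ρ * f (2*ρ) ≤ hh f ρ := by
  rcases eq_or_lt_of_le hρ with rfl | hρ
  · simp [hh_zero hf le_rfl, hf.zero 0 le_rfl]
  have hsplit : hh f ρ = (∫ u in (0:ℝ)..(ρ/2), kk f u) + ∫ u in (ρ/2)..ρ, kk f u := by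
    rw [hh, Fp, ← integral_add_adjacent_intervals (GoodMod.intInt (kk_good hf).mono 0 (ρ/2))
      (GoodMod.intInt (kk_good hf).mono (ρ/2) ρ)]
  have h1 : 0 ≤ ∫ u in (0:ℝ)..(ρ/2), kk f u :=
    intervalIntegral.integral_nonneg (by linarith) (fun u _ => (kk_good hf).nonneg u)
  have h2 : ∫ u in (ρ/2)..ρ, (2 * f (2*ρ)) ≤ ∫ u in (ρ/2)..ρ, kk f u := by
    apply intervalIntegral.integral_mono_on (by linarith) intervalIntegrable_const
      (GoodMod.intInt (kk_good hf).mono _ _)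
    intro u hu
    -- 2 f(2ρ) ≤ kk f (u) for u ≥ ρ/2 : kk f (ρ/2) = 2 Av (Av f) ρ ≥ 2 Av f (2ρ) ≥ 2 f (4ρ) ≥ 2 f(2ρ)
    have ha : Av f (2*ρ) ≤ Av (Av f) ρ := by
      have := le_Av (Av_good hf) hρ; linarith
    have hb : f (4*ρ) ≤ Av f (2*ρ) := by
      have := le_Av hf (by linarith : (0:ℝ) < 2*ρ)
      convert this using 2; ring
    have hc : f (2*ρ) ≤ f (4*ρ) := hf.mono (by linarith)
    have hk : 2 * f (2*ρ) ≤ kk f (ρ/2) := by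
      unfold kk
      have : (2:ℝ) * (ρ/2) = ρ := by ring
      rw [this]; linarith
    exact le_trans hk ((kk_good hf).mono hu.1)
  have h3 : ∫ u in (ρ/2)..ρ, (2 * f (2*ρ)) = ρ * f (2*ρ) := by
    simp; ring
  linarith [hsplit, h1, h2, h3]

lemma hh_mono (hf : GoodMod f) : Monotone (hh f) := by
  intro a b hab
  have : hh f b - hh f a = ∫ u in a..b, kk f u := Fp_sub (kk_good hf).mono a b
  have h2 : 0 ≤ ∫ u in a..b, kk f u :=
    intervalIntegral.integral_nonneg hab (fun u _ => (kk_good hf).nonneg u)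
  linarith



section Modulus
variable {n : ℕ} (T : ℝ) (w : ℝ → En n → ℝ) (t₀ : ℝ) (x₀ : En n)
  (q : ℝ) (p : En n) (P : Matrix (Fin n) (Fin n) ℝ)

def dd (sy : ℝ × En n) : ℝ := |sy.1 - t₀| + ‖sy.2 - x₀‖^2

def Sreg : Set (ℝ × En n) := (Set.Icc t₀ T ×ˢ (Set.univ : Set (En n))) \ {(t₀, x₀)}

def Dset (r : ℝ) : Set (ℝ × En n) := {sy ∈ Sreg T t₀ x₀ | dd t₀ x₀ sy ≤ r}

def ωmod (r : ℝ) : ℝ :=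
  sSup (insert 0 (parabolicQuot w t₀ x₀ q p P '' Dset T t₀ x₀ r))

variable {T t₀}

lemma dd_cont : Continuous (dd t₀ x₀ (n := n)) := by
  unfold dd; fun_prop

lemma dd_pos {sy : ℝ × En n} (h : sy ∈ Sreg T t₀ x₀) : 0 < dd t₀ x₀ sy := by
  rcases h with ⟨-, hne⟩
  simp only [mem_singleton_iff] at hne
  have hnn : (0:ℝ) ≤ dd t₀ x₀ sy := by
    unfold dd; positivity
  rcases lt_or_eq_of_le hnn with h | h
  · exact h
  · exfalso; apply hne
    have ha := abs_nonneg (sy.1 - t₀)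
    have hb := sq_nonneg ‖sy.2 - x₀‖
    unfold dd at h
    have h1 : |sy.1 - t₀| = 0 := by nlinarith
    have h1b : ‖sy.2 - x₀‖^2 = 0 := by nlinarith
    have h2 : sy.1 = t₀ := by have := abs_eq_zero.mp h1; linarith
    have h3 : sy.2 = x₀ := by
      have hn : ‖sy.2 - x₀‖ = 0 := by nlinarith [norm_nonneg (sy.2 - x₀)]
      exact sub_eq_zero.mp (norm_eq_zero.mp hn)
    exact Prod.ext h2 h3

lemma Dset_nonpos {r : ℝ} (hr : r ≤ 0) : Dset T t₀ x₀ r = (∅ : Set (ℝ × En n)) := by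
  ext sy
  simp only [Dset, mem_setOf_eq, mem_empty_iff_false, iff_false, not_and]
  intro hS
  have := dd_pos x₀ hS
  intro hle; linarith

variable {w x₀ q p P}

lemma ev_of_limsup
    (hls : Filter.limsup
      (fun sy : ℝ × En n => ((parabolicQuot w t₀ x₀ q p P sy : ℝ) : EReal))
      (𝓝[Sreg T t₀ x₀] (t₀, x₀)) ≤ 0) {ε : ℝ} (hε : 0 < ε) :
    ∃ δ > 0, ∀ sy ∈ Sreg T t₀ x₀ (n := n), dist sy (t₀, x₀) < δ →
      parabolicQuot w t₀ x₀ q p P sy < ε := by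
  have hlt : Filter.limsup
      (fun sy : ℝ × En n => ((parabolicQuot w t₀ x₀ q p P sy : ℝ) : EReal))
      (𝓝[Sreg T t₀ x₀] (t₀, x₀)) < (ε : EReal) := by
    apply lt_of_le_of_lt hls
    exact_mod_cast hε
  have hev := eventually_lt_of_limsup_lt hlt
  rw [eventually_nhdsWithin_iff, Metric.eventually_nhds_iff] at hev
  obtain ⟨δ, hδ, hfa⟩ := hev
  exact ⟨δ, hδ, fun sy hsy hd => by exact_mod_cast hfa hd hsy⟩

/-- From `dd sy ≤ min (δ/2) (δ^2/2)` we get `dist sy (t₀,x₀) < δ`. -/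
lemma dist_lt_of_dd_le {δ : ℝ} (hδ : 0 < δ) {sy : ℝ × En n}
    (h : dd t₀ x₀ sy ≤ min (δ/2) (δ^2/2)) : dist sy (t₀, x₀) < δ := by
  have h1 : |sy.1 - t₀| ≤ δ/2 := by
    have := min_le_left (δ/2) (δ^2/2)
    unfold dd at h
    nlinarith [sq_nonneg ‖sy.2 - x₀‖]
  have h2 : ‖sy.2 - x₀‖^2 ≤ δ^2/2 := by
    have := min_le_right (δ/2) (δ^2/2)
    unfold dd at h
    nlinarith [abs_nonneg (sy.1 - t₀)]
  rw [Prod.dist_eq, max_lt_iff]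
  constructor
  · rw [Real.dist_eq]; linarith
  · rw [dist_eq_norm]
    nlinarith [norm_nonneg (sy.2 - x₀)]

variable (hT : t₀ < T) (ht₀ : 0 ≤ t₀) (hTT : T ≤ T)
  (hw : ContinuousOn (fun sy : ℝ × En n => w sy.1 sy.2) (Set.Icc 0 T ×ˢ Set.univ))
  (hls : Filter.limsup
      (fun sy : ℝ × En n => ((parabolicQuot w t₀ x₀ q p P sy : ℝ) : EReal))
      (𝓝[Sreg T t₀ x₀] (t₀, x₀)) ≤ 0)

include hT ht₀ hw hls

lemma quot_bddAbove (r : ℝ) :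
    BddAbove (insert 0 (parabolicQuot w t₀ x₀ q p P '' Dset T t₀ x₀ r)) := by
  rcases le_or_gt r 0 with hr | hr
  · rw [Dset_nonpos x₀ hr]; simp
  obtain ⟨δ, hδ, hbd⟩ := ev_of_limsup (T := T) hls one_pos
  set c := min (δ/2) (δ^2/2) with hc
  have hcpos : 0 < c := by positivity
  -- compact part
  set K : Set (ℝ × En n) := {sy | sy.1 ∈ Set.Icc t₀ T ∧ c ≤ dd t₀ x₀ sy ∧ dd t₀ x₀ sy ≤ r} with hK
  have hKclosed : IsClosed K := by
    apply IsClosed.inter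
    · exact isClosed_Icc.preimage continuous_fst
    · exact ((isClosed_Icc).preimage (dd_cont x₀ (t₀ := t₀)))
  have hKbdd : Bornology.IsBounded K := by
    apply Bornology.IsBounded.subset
      ((Metric.isBounded_Icc t₀ T).prod (Metric.isBounded_closedBall (x := x₀) (r := Real.sqrt r)))
    intro sy hsy
    refine ⟨hsy.1, ?_⟩
    simp only [Metric.mem_closedBall, dist_eq_norm]
    have h2 : ‖sy.2 - x₀‖^2 ≤ r := by
      have := hsy.2.2; unfold dd at this; nlinarith [abs_nonneg (sy.1 - t₀)]
    calc ‖sy.2 - x₀‖ = Real.sqrt (‖sy.2 - x₀‖^2) := by rw [Real.sqrt_sq (norm_nonneg _)]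
    _ ≤ Real.sqrt r := Real.sqrt_le_sqrt h2
  have hKcompact : IsCompact K := Metric.isCompact_of_isClosed_isBounded hKclosed hKbdd
  have hcont : ContinuousOn (parabolicQuot w t₀ x₀ q p P) K := by
    apply ContinuousOn.div
    · apply ContinuousOn.sub
      apply ContinuousOn.sub
      apply ContinuousOn.sub
      apply ContinuousOn.sub
      · apply hw.comp (continuousOn_id (s := K))
        intro sy hsy
        exact ⟨⟨le_trans ht₀ hsy.1.1, hsy.1.2⟩, trivial⟩
      · exact continuousOn_const
      · fun_prop
      · apply Continuous.continuousOn
        exact continuous_const.inner (by fun_prop)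
      · apply ContinuousOn.mul continuousOn_const
        apply Continuous.continuousOn
        apply Continuous.inner _ (by fun_prop)
        exact (Matrix.toEuclideanLin P).toContinuousLinearMap.continuous.comp (by fun_prop)
    · exact (dd_cont x₀ (t₀ := t₀)).continuousOn
    · intro sy hsy
      have h1 := hsy.2.1
      intro h0
      rw [show |sy.1 - t₀| + ‖sy.2 - x₀‖^2 = dd t₀ x₀ sy from rfl] at h0
      rw [h0] at h1; linarith
  obtain ⟨M, hM⟩ := hKcompact.exists_bound_of_continuousOn hcont
  refine ⟨max 1 (max 0 M), ?_⟩
  rintro x (rfl | ⟨sy, hsy, rfl⟩)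
  · exact le_trans (le_max_left 0 M) (le_max_right 1 _)
  rcases le_or_gt (dd t₀ x₀ sy) c with hlt | hge
  · have := hbd sy hsy.1 (dist_lt_of_dd_le hδ hlt)
    exact le_trans this.le (le_max_left 1 _)
  · have hmem : sy ∈ K := ⟨hsy.1.1.1, hge.le, hsy.2⟩
    have := hM sy hmem
    have h2 : parabolicQuot w t₀ x₀ q p P sy ≤ M := le_trans (le_abs_self _) this
    exact le_trans h2 (le_trans (le_max_right 0 M) (le_max_right 1 _))

lemma quot_le_ωmod {sy : ℝ × En n} (hsy : sy ∈ Sreg T t₀ x₀) :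
    parabolicQuot w t₀ x₀ q p P sy ≤ ωmod T w t₀ x₀ q p P (dd t₀ x₀ sy) := by
  apply le_csSup (quot_bddAbove hT ht₀ hw hls _)
  exact Set.mem_insert_of_mem _ ⟨sy, ⟨hsy, le_rfl⟩, rfl⟩

lemma ωmod_small {ε : ℝ} (hε : 0 < ε) :
    ∃ δ > 0, ωmod T w t₀ x₀ q p P δ ≤ ε := by
  obtain ⟨δ', hδ', hbd⟩ := ev_of_limsup (T := T) hls hε
  refine ⟨min (δ'/2) (δ'^2/2), by positivity, ?_⟩
  apply csSup_le (Set.insert_nonempty _ _)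
  rintro x (rfl | ⟨sy, hsy, rfl⟩)
  · exact hε.le
  · exact (hbd sy hsy.1 (dist_lt_of_dd_le hδ' hsy.2)).le

lemma ωmod_good : GoodMod (ωmod T w t₀ x₀ q p P) where
  mono := by
    intro a b hab
    apply csSup_le_csSup (quot_bddAbove hT ht₀ hw hls b) (Set.insert_nonempty _ _)
    apply Set.insert_subset_insert
    apply Set.image_mono
    intro sy hsy
    exact ⟨hsy.1, le_trans hsy.2 hab⟩
  nonneg := fun r => le_csSup (quot_bddAbove hT ht₀ hw hls r) (Set.mem_insert 0 _)
  zero := by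
    intro r hr
    unfold ωmod
    rw [Dset_nonpos x₀ hr]
    simp
  tend := by
    rw [Metric.tendsto_nhds_nhds]
    intro ε hε
    obtain ⟨δ, hδ, hsm⟩ := ωmod_small (T := T) hT ht₀ hw hls (half_pos hε)
    refine ⟨δ, hδ, fun r hr => ?_⟩
    have hmono : ωmod T w t₀ x₀ q p P r ≤ ε/2 := by
      rcases le_or_gt r 0 with h | h
      · rw [show ωmod T w t₀ x₀ q p P r = 0 from by unfold ωmod; rw [Dset_nonpos x₀ h]; simp]
        positivity
      · apply le_trans _ hsm
        apply csSup_le_csSup (quot_bddAbove hT ht₀ hw hls δ) (Set.insert_nonempty _ _)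
        apply Set.insert_subset_insert
        apply Set.image_mono
        intro sy hsy
        refine ⟨hsy.1, le_trans hsy.2 ?_⟩
        rw [Real.dist_eq, sub_zero] at hr
        exact le_trans (le_abs_self r) (by linarith)
    have hnn : 0 ≤ ωmod T w t₀ x₀ q p P r :=
      le_csSup (quot_bddAbove hT ht₀ hw hls r) (Set.mem_insert 0 _)
    rw [Real.dist_eq, sub_zero, abs_of_nonneg hnn]
    linarith

end Modulus
section Constr
variable {n : ℕ} (f : ℝ → En n → ℝ)

/-- squared-distance-to-`x₀` function, written via the inner product. -/
def ρf (x₀ : En n) (y : En n) : ℝ := ‖y - x₀‖^2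

lemma toEuc_apply {n : ℕ} (A : Matrix (Fin n) (Fin n) ℝ) (v : En n) (i : Fin n) :
    (Matrix.toEuclideanLin A) v i = ∑ j, A i j * v j := by
  rw [Matrix.toEuclideanLin_apply]; rfl

lemma inner_coord {n : ℕ} (u v : En n) : ⟪u, v⟫ = ∑ j, u j * v j := by
  rw [PiLp.inner_apply]; simp [mul_comm]

lemma toEuc_symm {n : ℕ} {P : Matrix (Fin n) (Fin n) ℝ} (hP : P.IsSymm) (u v : En n) :
    ⟪(Matrix.toEuclideanLin P) u, v⟫ = ⟪u, (Matrix.toEuclideanLin P) v⟫ := by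
  rw [inner_coord, inner_coord]
  simp only [toEuc_apply]
  simp_rw [Finset.sum_mul, Finset.mul_sum]
  rw [Finset.sum_comm]
  apply Finset.sum_congr rfl
  intro j _
  apply Finset.sum_congr rfl
  intro i _
  have hsym : P i j = P j i := by
    have := congrFun (congrFun hP j) i
    rw [Matrix.transpose_apply] at this
    exact this
  rw [hsym]; ring

/-- The matrix `v vᵀ`. -/
def vvM {n : ℕ} (v : En n) : Matrix (Fin n) (Fin n) ℝ := Matrix.of fun i j => v i * v j

section TestFun
variable {n : ℕ} (f : ℝ → ℝ) (c t₀ : ℝ) (x₀ : En n) (q : ℝ) (p : En n)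
  (P : Matrix (Fin n) (Fin n) ℝ)

def φc (s : ℝ) (y : En n) : ℝ :=
  c + q*(s-t₀) + ⟪p, y-x₀⟫ + (1/2)*⟪(Matrix.toEuclideanLin P) (y-x₀), y-x₀⟫
    + 2*hh f (s-t₀) + (s-t₀)^2 + 2*hh f (ρf x₀ y) + (ρf x₀ y)^2

def φtc (s : ℝ) (_ : En n) : ℝ := q + 2*kk f (s-t₀) + 2*(s-t₀)

def φxc (_ : ℝ) (y : En n) : En n :=
  p + (Matrix.toEuclideanLin P) (y-x₀) + (4*kk f (ρf x₀ y) + 4*(ρf x₀ y)) • (y-x₀)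

def φxxc (_ : ℝ) (y : En n) : Matrix (Fin n) (Fin n) ℝ :=
  P + (4*kk f (ρf x₀ y) + 4*(ρf x₀ y)) • (1 : Matrix (Fin n) (Fin n) ℝ)
    + (8*kdp f (ρf x₀ y) + 8) • vvM (y-x₀)

variable {f}

lemma rho_cont : Continuous (ρf x₀ (n := n)) := by unfold ρf; fun_prop

lemma rho_nonneg (y : En n) : 0 ≤ ρf x₀ y := by unfold ρf; positivity

lemma hasFDerivAt_rho (y₁ : En n) :
    HasFDerivAt (ρf x₀) ((2:ℝ) • (innerSL ℝ (y₁ - x₀))) y₁ := by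
  have hid : HasFDerivAt (fun y : En n => y - x₀) (ContinuousLinearMap.id ℝ (En n)) y₁ :=
    (hasFDerivAt_id y₁).sub_const x₀
  have h := hid.inner ℝ hid
  have heq : (fun y : En n => ⟪y - x₀, y - x₀⟫) = ρf x₀ := by
    funext y; rw [ρf, real_inner_self_eq_norm_sq]
  rw [heq] at h
  refine h.congr_fderiv ?_
  apply ContinuousLinearMap.ext
  intro w
  simp only [ContinuousLinearMap.smul_apply, innerSL_apply_apply, fderivInnerCLM_apply,
    ContinuousLinearMap.comp_apply, ContinuousLinearMap.prod_apply,
    ContinuousLinearMap.coe_id', id_eq, smul_eq_mul]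
  rw [real_inner_comm w (y₁ - x₀)]
  ring

/-- time-slice of the test function has the gradient `φxc`. -/
lemma hasGradientAt_φc (hf : GoodMod f) (hP : P.IsSymm) (s : ℝ) (y₁ : En n) :
    HasGradientAt (φc f c t₀ x₀ q p P s) (φxc f x₀ p P s y₁) y₁ := by
  have hid : HasFDerivAt (fun y : En n => y - x₀) (ContinuousLinearMap.id ℝ (En n)) y₁ :=
    (hasFDerivAt_id y₁).sub_const x₀
  -- linear term
  have h3 : HasFDerivAt (fun y : En n => ⟪p, y - x₀⟫) (innerSL ℝ p) y₁ := by
    have := (innerSL ℝ p).hasFDerivAt.comp y₁ hid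
    simpa [Function.comp_def] using this
  -- quadratic term
  set A := (Matrix.toEuclideanLin P).toContinuousLinearMap with hA
  have hAv : HasFDerivAt (fun y : En n => (Matrix.toEuclideanLin P) (y - x₀)) A y₁ := by
    have h := A.hasFDerivAt.comp y₁ hid
    simp only [Function.comp_def, ContinuousLinearMap.comp_id] at h
    exact h
  have h4 := (hAv.inner ℝ hid).const_mul (1/2 : ℝ)
  -- hh ∘ ρ term
  have h7 := ((hh_hasDeriv hf (ρf x₀ y₁)).comp_hasFDerivAt y₁ (hasFDerivAt_rho x₀ y₁)).const_mul 2
  -- ρ² term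
  have h8 : HasFDerivAt (fun y : En n => (ρf x₀ y)^2)
      ((2 * ρf x₀ y₁) • ((2:ℝ) • (innerSL ℝ (y₁ - x₀)))) y₁ := by
    have hsq : HasDerivAt (fun u : ℝ => u^2) (2 * ρf x₀ y₁) (ρf x₀ y₁) := by
      simpa using (hasDerivAt_pow 2 (ρf x₀ y₁))
    exact hsq.comp_hasFDerivAt y₁ (hasFDerivAt_rho x₀ y₁)
  simp only [Function.comp_def] at h7
  have htotal := ((((h3.const_add (c + q*(s-t₀))).add h4).add_const
      (2*hh f (s-t₀))).add_const ((s-t₀)^2)).add ((h7.add h8))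
  have hshape : (fun y : En n => ((c + q*(s-t₀) + ⟪p, y - x₀⟫ +
        1/2 * ⟪(Matrix.toEuclideanLin P) (y - x₀), y - x₀⟫ + 2*hh f (s-t₀)) + (s-t₀)^2)
        + (2 * hh f (ρf x₀ y) + (ρf x₀ y)^2)) = φc f c t₀ x₀ q p P s := by
    funext y; rw [φc]; ring
  rw [← hshape]
  refine htotal.congr_fderiv ?_
  apply ContinuousLinearMap.ext
  intro u
  simp only [InnerProductSpace.toDual_apply_apply, ContinuousLinearMap.add_apply,
    ContinuousLinearMap.smul_apply, innerSL_apply_apply, fderivInnerCLM_apply,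
    ContinuousLinearMap.comp_apply, ContinuousLinearMap.prod_apply,
    ContinuousLinearMap.coe_id', id_eq, smul_eq_mul]
  rw [φxc]
  rw [inner_add_left, inner_add_left, real_inner_smul_left]
  have hsymm : ⟪A u, y₁ - x₀⟫ = ⟪(Matrix.toEuclideanLin P) (y₁ - x₀), u⟫ := by
    rw [hA]
    rw [show (A u : En n) = (Matrix.toEuclideanLin P) u from rfl]
    rw [toEuc_symm hP, real_inner_comm]
  rw [hsymm]
  rw [real_inner_comm u (y₁ - x₀)]
  ring

end TestFun
end Constr
section Hessian
variable {n : ℕ} {f : ℝ → ℝ} {x₀ : En n} {p : En n} {P : Matrix (Fin n) (Fin n) ℝ}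

lemma toEuc_one_apply (u : En n) :
    (Matrix.toEuclideanLin (1 : Matrix (Fin n) (Fin n) ℝ)) u = u := by
  rw [Matrix.toEuclideanLin_apply, Matrix.one_mulVec]

lemma toEuc_vvM (v u : En n) :
    (Matrix.toEuclideanLin (vvM v)) u = ⟪v, u⟫ • v := by
  ext i
  rw [toEuc_apply, PiLp.smul_apply, inner_coord, smul_eq_mul, Finset.sum_mul]
  apply Finset.sum_congr rfl
  intro j _
  show v i * v j * u j = v j * u j * v i
  ring

lemma abs_coord_le (v : En n) (i : Fin n) : |v i| ≤ ‖v‖ := by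
  have h := EuclideanSpace.norm_eq v
  have h2 : |v i| = Real.sqrt (‖v i‖^2) := by
    rw [Real.norm_eq_abs, Real.sqrt_sq_eq_abs, abs_abs]
  rw [h, h2]
  apply Real.sqrt_le_sqrt
  exact Finset.single_le_sum (f := fun j => ‖v j‖^2) (fun j _ => sq_nonneg _) (Finset.mem_univ i)

lemma rho_pos {y₁ : En n} (hne : y₁ ≠ x₀) : 0 < ρf x₀ y₁ := by
  have : y₁ - x₀ ≠ 0 := sub_ne_zero.mpr hne
  have := norm_pos_iff.mpr this
  unfold ρf; positivity

lemma coef_cont (hf : GoodMod f) :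
    Continuous (fun y : En n => 4*kk f (ρf x₀ y) + 4*(ρf x₀ y)) := by
  apply Continuous.add
  · exact continuous_const.mul ((kk_cont hf).comp (rho_cont x₀))
  · exact continuous_const.mul (rho_cont x₀)

lemma coef_at (hf : GoodMod f) : (4*kk f (ρf x₀ x₀) + 4*(ρf x₀ x₀)) = 0 := by
  have h0 : ρf x₀ x₀ = 0 := by unfold ρf; simp
  rw [h0, (kk_good hf).zero 0 le_rfl]; ring

lemma hasFDerivAt_φxc_center (hf : GoodMod f) (s : ℝ) :
    HasFDerivAt (φxc f x₀ p P s)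
      ((Matrix.toEuclideanLin (φxxc f x₀ P s x₀)).toContinuousLinearMap) x₀ := by
  have hid : HasFDerivAt (fun y : En n => y - x₀) (ContinuousLinearMap.id ℝ (En n)) x₀ :=
    (hasFDerivAt_id x₀).sub_const x₀
  set A := (Matrix.toEuclideanLin P).toContinuousLinearMap with hA
  have hAv : HasFDerivAt (fun y : En n => (Matrix.toEuclideanLin P) (y - x₀)) A x₀ := by
    have h := A.hasFDerivAt.comp x₀ hid
    simp only [Function.comp_def, ContinuousLinearMap.comp_id] at h
    exact h
  have hg : HasFDerivAt (fun y : En n => (4*kk f (ρf x₀ y) + 4*(ρf x₀ y)) • (y - x₀))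
      (0 : En n →L[ℝ] En n) x₀ := by
    rw [hasFDerivAt_iff_isLittleO_nhds_zero]
    rw [Asymptotics.isLittleO_iff]
    intro C hC
    have hct : Tendsto (fun h : En n => 4*kk f (ρf x₀ (x₀ + h)) + 4*(ρf x₀ (x₀ + h)))
        (𝓝 0) (𝓝 0) := by
      have hcont2 : Continuous (fun h : En n => x₀ + h) := continuous_const.add continuous_id
      have h1 := (coef_cont (x₀ := x₀) hf).comp hcont2
      have h2 := h1.tendsto 0
      simpa [coef_at hf, Function.comp_def] using h2
    have hev := hct.eventually (eventually_abs_sub_lt 0 hC)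
    filter_upwards [hev] with u hu
    simp only [sub_zero] at hu
    have heq : (4*kk f (ρf x₀ (x₀ + u)) + 4*(ρf x₀ (x₀ + u))) • (x₀ + u - x₀)
        - (4*kk f (ρf x₀ x₀) + 4*(ρf x₀ x₀)) • (x₀ - x₀) - (0 : En n →L[ℝ] En n) u
        = (4*kk f (ρf x₀ (x₀ + u)) + 4*(ρf x₀ (x₀ + u))) • u := by
      simp
    rw [heq, norm_smul]
    gcongr
    rw [Real.norm_eq_abs]
    exact hu.le
  have htot := ((hasFDerivAt_const p x₀).add hAv).add hg
  have hfun : (fun y : En n => p + (Matrix.toEuclideanLin P) (y - x₀)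
      + (4*kk f (ρf x₀ y) + 4*(ρf x₀ y)) • (y - x₀)) = φxc f x₀ p P s := rfl
  rw [← hfun]
  refine htot.congr_fderiv ?_
  have hmat : φxxc f x₀ P s x₀ = P := by
    rw [φxxc, coef_at hf]
    have hvv : vvM (x₀ - x₀) = (0 : Matrix (Fin n) (Fin n) ℝ) := by
      unfold vvM
      ext i j
      simp
    rw [hvv]
    simp
  rw [hmat]
  simp [hA]

lemma hasFDerivAt_φxc (hf : GoodMod f) (s : ℝ) (y₁ : En n) :
    HasFDerivAt (φxc f x₀ p P s)
      ((Matrix.toEuclideanLin (φxxc f x₀ P s y₁)).toContinuousLinearMap) y₁ := by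
  obtain heq | hne := eq_or_ne y₁ x₀
  · rw [heq]
    exact hasFDerivAt_φxc_center hf s
  · have hid : HasFDerivAt (fun y : En n => y - x₀) (ContinuousLinearMap.id ℝ (En n)) y₁ :=
      (hasFDerivAt_id y₁).sub_const x₀
    set A := (Matrix.toEuclideanLin P).toContinuousLinearMap with hA
    have hAv : HasFDerivAt (fun y : En n => (Matrix.toEuclideanLin P) (y - x₀)) A y₁ := by
      have h := A.hasFDerivAt.comp y₁ hid
      simp only [Function.comp_def, ContinuousLinearMap.comp_id] at h
      exact h
    have hρ : 0 < ρf x₀ y₁ := rho_pos hne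
    have hc : HasDerivAt (fun u : ℝ => 4*kk f u + 4*u) (4*kdd f (ρf x₀ y₁) + 4) (ρf x₀ y₁) := by
      have h1 := (kk_hasDeriv hf hρ).const_mul 4
      have h2 : HasDerivAt (fun u : ℝ => 4*u) 4 (ρf x₀ y₁) := by
        simpa using (hasDerivAt_id (ρf x₀ y₁)).const_mul 4
      exact h1.add h2
    have hcoef : HasFDerivAt (fun y : En n => 4*kk f (ρf x₀ y) + 4*(ρf x₀ y))
        ((4*kdd f (ρf x₀ y₁) + 4) • ((2:ℝ) • (innerSL ℝ (y₁ - x₀)))) y₁ := by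
      have := hc.comp_hasFDerivAt y₁ (hasFDerivAt_rho x₀ y₁)
      simpa [Function.comp_def] using this
    have hsm := hcoef.smul hid
    have htot := ((hasFDerivAt_const p y₁).add hAv).add hsm
    have hfun : (fun y : En n => p + (Matrix.toEuclideanLin P) (y - x₀)
        + (4*kk f (ρf x₀ y) + 4*(ρf x₀ y)) • (y - x₀)) = φxc f x₀ p P s := rfl
    rw [← hfun]
    refine htot.congr_fderiv ?_
    apply ContinuousLinearMap.ext
    intro u
    rw [φxxc]
    have hkdp : kdp f (ρf x₀ y₁) = kdd f (ρf x₀ y₁) := by rw [kdp, if_pos hρ]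
    simp only [LinearMap.coe_toContinuousLinearMap', map_add, LinearMap.add_apply, _root_.map_smul,
      ContinuousLinearMap.add_apply, ContinuousLinearMap.zero_apply,
      ContinuousLinearMap.smul_apply, ContinuousLinearMap.smulRight_apply,
      ContinuousLinearMap.coe_id', id_eq, innerSL_apply_apply, LinearMap.smul_apply]
    rw [toEuc_one_apply, toEuc_vvM, hkdp]
    rw [zero_add]
    simp only [hA, LinearMap.coe_toContinuousLinearMap', smul_smul, smul_eq_mul, ← add_assoc]
    congr 2
    ring
end Hessian
section ContFields
variable {n : ℕ} {f : ℝ → ℝ} {c t₀ : ℝ} {x₀ : En n} {q : ℝ} {p : En n}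
  {P : Matrix (Fin n) (Fin n) ℝ}

lemma cont_φc (hf : GoodMod f) :
    Continuous (fun sy : ℝ × En n => φc f c t₀ x₀ q p P sy.1 sy.2) := by
  unfold φc
  have h1 : Continuous (fun sy : ℝ × En n => ⟪p, sy.2 - x₀⟫) :=
    continuous_const.inner (by fun_prop)
  have h2 : Continuous (fun sy : ℝ × En n => ⟪(Matrix.toEuclideanLin P) (sy.2 - x₀), sy.2 - x₀⟫) := by
    apply Continuous.inner _ (by fun_prop)
    exact (Matrix.toEuclideanLin P).toContinuousLinearMap.continuous.comp (by fun_prop)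
  have h3 : Continuous (fun sy : ℝ × En n => hh f (sy.1 - t₀)) :=
    (hh_cont hf).comp (by fun_prop)
  have h4 : Continuous (fun sy : ℝ × En n => hh f (ρf x₀ sy.2)) :=
    (hh_cont hf).comp ((rho_cont x₀).comp continuous_snd)
  have h5 : Continuous (fun sy : ℝ × En n => ρf x₀ sy.2) := (rho_cont x₀).comp continuous_snd
  fun_prop

lemma cont_φtc (hf : GoodMod f) :
    Continuous (fun sy : ℝ × En n => φtc f t₀ q sy.1 sy.2) := by
  unfold φtc
  have h1 : Continuous (fun sy : ℝ × En n => kk f (sy.1 - t₀)) :=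
    (kk_cont hf).comp (by fun_prop)
  fun_prop

lemma cont_φxc (hf : GoodMod f) :
    Continuous (fun sy : ℝ × En n => φxc f x₀ p P sy.1 sy.2) := by
  unfold φxc
  have h0 : Continuous (fun sy : ℝ × En n => (Matrix.toEuclideanLin P) (sy.2 - x₀)) :=
    (Matrix.toEuclideanLin P).toContinuousLinearMap.continuous.comp (by fun_prop)
  have h1 : Continuous (fun sy : ℝ × En n => kk f (ρf x₀ sy.2)) :=
    (kk_cont hf).comp ((rho_cont x₀).comp continuous_snd)
  have h2 : Continuous (fun sy : ℝ × En n => ρf x₀ sy.2) := (rho_cont x₀).comp continuous_snd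
  have h3 : Continuous (fun sy : ℝ × En n =>
      (4*kk f (ρf x₀ sy.2) + 4*(ρf x₀ sy.2)) • (sy.2 - x₀)) :=
    ((continuous_const.mul h1).add (continuous_const.mul h2)).smul (by fun_prop)
  exact (continuous_const.add h0).add h3

lemma cont_kdp_term_center (hf : GoodMod f) (i j : Fin n) :
    ContinuousAt (fun y : En n => kdp f (ρf x₀ y) * ((y - x₀) i * (y - x₀) j)) x₀ := by
  · have hKD : Continuous (fun y : En n => kdp f (ρf x₀ y) * (ρf x₀ y)) :=
      (kdp_mul_cont hf).comp (rho_cont x₀)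
    have hval : kdp f (ρf x₀ x₀) * ((x₀ - x₀) i * (x₀ - x₀) j) = 0 := by
      have : (x₀ - x₀) = 0 := sub_self x₀
      rw [this]
      simp
    unfold ContinuousAt
    have hval' : (fun y : En n => kdp f (ρf x₀ y) * ((y - x₀) i * (y - x₀) j)) x₀ = 0 := hval
    rw [hval']
    apply squeeze_zero_norm (a := fun y => |kdp f (ρf x₀ y) * (ρf x₀ y)|)
    · intro y
      rw [Real.norm_eq_abs, abs_mul, abs_mul, abs_mul]
      have hle : |(y - x₀) i| * |(y - x₀) j| ≤ |ρf x₀ y| := by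
        rw [abs_of_nonneg (rho_nonneg x₀ y), ρf]
        have hi := abs_coord_le (y - x₀) i
        have hj := abs_coord_le (y - x₀) j
        have h1 := abs_nonneg ((y - x₀) i)
        have h2 := abs_nonneg ((y - x₀) j)
        nlinarith [norm_nonneg (y - x₀)]
      exact mul_le_mul_of_nonneg_left hle (abs_nonneg _)
    · have := (hKD.abs).tendsto x₀
      have hv2 : |kdp f (ρf x₀ x₀) * ρf x₀ x₀| = 0 := by
        have h0 : ρf x₀ x₀ = 0 := by rw [ρf]; simp
        rw [h0]
        simp
      rwa [hv2] at this

lemma cont_kdp_term (hf : GoodMod f) (i j : Fin n) :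
    Continuous (fun y : En n => kdp f (ρf x₀ y) * ((y - x₀) i * (y - x₀) j)) := by
  rw [continuous_iff_continuousAt]
  intro y₁
  obtain heq | hne := eq_or_ne y₁ x₀
  · rw [heq]
    exact cont_kdp_term_center hf i j
  · have hρ : 0 < ρf x₀ y₁ := rho_pos hne
    apply ContinuousAt.mul
    · have hev : ∀ᶠ y : En n in 𝓝 y₁, kdd f (ρf x₀ y) = kdp f (ρf x₀ y) := by
        have hopen : ∀ᶠ y : En n in 𝓝 y₁, 0 < ρf x₀ y :=
          ((rho_cont x₀).continuousAt).eventually (eventually_gt_nhds hρ)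
        filter_upwards [hopen] with y hy
        rw [kdp, if_pos hy]
      apply ContinuousAt.congr _ hev
      exact ((kdd_contOn hf).continuousAt (Ioi_mem_nhds hρ)).comp (rho_cont x₀).continuousAt
    · fun_prop

lemma cont_φxxc (hf : GoodMod f) :
    Continuous (fun sy : ℝ × En n => φxxc f x₀ P sy.1 sy.2) := by
  have key : Continuous (fun y : En n => φxxc f x₀ P 0 y) := by
    apply continuous_matrix
    intro i j
    simp only [φxxc, Matrix.add_apply, Matrix.smul_apply, smul_eq_mul]
    apply Continuous.add
    apply Continuous.add
    · exact continuous_const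
    · have h1 : Continuous (fun y : En n => kk f (ρf x₀ y)) := (kk_cont hf).comp (rho_cont x₀)
      exact ((continuous_const.mul h1).add (continuous_const.mul (rho_cont x₀))).mul continuous_const
    · have hterm := cont_kdp_term (x₀ := x₀) hf i j
      have hwv : Continuous (fun y : En n => (vvM (y - x₀)) i j) := by
        show Continuous (fun y : En n => (y - x₀) i * (y - x₀) j)
        fun_prop
      have : Continuous (fun y : En n =>
          8 * (kdp f (ρf x₀ y) * ((y - x₀) i * (y - x₀) j)) + 8 * ((y - x₀) i * (y - x₀) j)) := by
        fun_prop
      apply Continuous.congr this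
      intro y
      show _ = (8 * kdp f (ρf x₀ y) + 8) * (vvM (y - x₀)) i j
      show _ = (8 * kdp f (ρf x₀ y) + 8) * ((y - x₀) i * (y - x₀) j)
      ring
  have : (fun sy : ℝ × En n => φxxc f x₀ P sy.1 sy.2)
      = (fun y : En n => φxxc f x₀ P 0 y) ∘ Prod.snd := rfl
  rw [this]
  exact key.comp continuous_snd

lemma hasDerivAt_time (hf : GoodMod f) (t : ℝ) (x : En n) :
    HasDerivAt (fun s => φc f c t₀ x₀ q p P s x) (φtc f t₀ q t x) t := by
  have h1 : HasDerivAt (fun s : ℝ => q*(s - t₀)) q t := by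
    simpa using ((hasDerivAt_id t).sub_const t₀).const_mul q
  have h2 : HasDerivAt (fun s : ℝ => 2 * hh f (s - t₀)) (2 * kk f (t - t₀)) t := by
    have := ((hh_hasDeriv hf (t - t₀)).comp t ((hasDerivAt_id t).sub_const t₀)).const_mul 2
    simpa [Function.comp_def] using this
  have h3 : HasDerivAt (fun s : ℝ => (s - t₀)^2) (2*(t - t₀)) t := by
    have := (((hasDerivAt_id t).sub_const t₀).pow 2)
    simpa [mul_comm, Pi.pow_def] using this
  have htot := (((((h1.const_add c).add_const (⟪p, x - x₀⟫)).add_const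
      ((1/2)*⟪(Matrix.toEuclideanLin P) (x - x₀), x - x₀⟫)).add h2).add h3).add_const
      (2*hh f (ρf x₀ x) + (ρf x₀ x)^2)
  have hfun : (fun s : ℝ => ((c + q*(s-t₀) + ⟪p, x - x₀⟫
      + (1/2)*⟪(Matrix.toEuclideanLin P) (x - x₀), x - x₀⟫) + 2*hh f (s-t₀) + (s-t₀)^2)
      + (2*hh f (ρf x₀ x) + (ρf x₀ x)^2)) = (fun s => φc f c t₀ x₀ q p P s x) := by
    funext s; rw [φc]; ring
  rw [← hfun]
  exact htot

lemma φc_at (hf : GoodMod f) : φc f c t₀ x₀ q p P t₀ x₀ = c := by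
  rw [φc]
  have h0 : ρf x₀ x₀ = 0 := by rw [ρf]; simp
  rw [h0, hh_zero hf le_rfl, sub_self]
  rw [hh_zero hf le_rfl]
  simp

lemma φtc_at (hf : GoodMod f) : φtc f t₀ q t₀ x₀ = q := by
  simp [φtc, (kk_good hf).zero 0 le_rfl]

lemma φxc_at : φxc f x₀ p P t₀ x₀ = p := by
  rw [φxc, sub_self]
  simp

lemma φxxc_at (hf : GoodMod f) : φxxc f x₀ P t₀ x₀ = P := by
  rw [φxxc, coef_at hf]
  have hvv : vvM (x₀ - x₀) = (0 : Matrix (Fin n) (Fin n) ℝ) := by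
    unfold vvM; ext i j; simp
  rw [hvv]
  simp

end ContFields
lemma omega_dom {f : ℝ → ℝ} (hf : GoodMod f) {a b : ℝ} (ha : 0 ≤ a) (hb : 0 ≤ b) :
    f (a + b) * (a + b) ≤ 2 * hh f a + 2 * hh f b := by
  rcases le_total a b with h | h
  · have h1 : f (a+b) * (a+b) ≤ f (2*b) * (2*b) :=
      mul_le_mul (hf.mono (by linarith)) (by linarith) (by linarith) (hf.nonneg _)
    have h2 := hh_ge hf hb
    have h3 := hh_nonneg hf a
    nlinarith
  · have h1 : f (a+b) * (a+b) ≤ f (2*a) * (2*a) :=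
      mul_le_mul (hf.mono (by linarith)) (by linarith) (by linarith) (hf.nonneg _)
    have h2 := hh_ge hf ha
    have h3 := hh_nonneg hf b
    nlinarith

lemma limsup_nonpos_of_eps {α : Type*} {l : Filter α} {u : α → ℝ}
    (h : ∀ ε : ℝ, 0 < ε → ∀ᶠ x in l, u x ≤ ε) :
    Filter.limsup (fun x => ((u x : ℝ) : EReal)) l ≤ 0 := by
  by_contra hlt
  rw [not_le] at hlt
  obtain ⟨c, hc0, hclt⟩ := EReal.lt_iff_exists_real_btwn.mp hlt
  have hc0' : (0:ℝ) < c := by exact_mod_cast hc0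
  have hev := h c hc0'
  have hle : Filter.limsup (fun x => ((u x : ℝ) : EReal)) l ≤ (c : EReal) :=
    Filter.limsup_le_of_le (by isBoundedDefault)
      (by filter_upwards [hev] with x hx; exact_mod_cast hx)
  exact absurd hclt (not_lt.mpr hle)

section Backward
variable {n : ℕ} {T : ℝ}

noncomputable def toDualCLM (n : ℕ) : En n →L[ℝ] (En n →L[ℝ] ℝ) :=
  (InnerProductSpace.toDual ℝ (En n)).toContinuousLinearEquiv.toContinuousLinearMap

lemma toDualCLM_apply (u v : En n) : toDualCLM n u v = ⟪u, v⟫ := rfl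

lemma hess_symm {φ φt : ℝ → En n → ℝ} {φx : ℝ → En n → En n}
    {φxx : ℝ → En n → Matrix (Fin n) (Fin n) ℝ} (hc : IsC12 T φ φt φx φxx)
    {t : ℝ} (ht : t ∈ Set.Icc 0 T) (x : En n) : (φxx t x).IsSymm := by
  have hf : ∀ y : En n, HasFDerivAt (φ t) (toDualCLM n (φx t y)) y := fun y => hc.hasGradX t ht y
  have hf'' : HasFDerivAt (fun y => toDualCLM n (φx t y))
      ((toDualCLM n).comp (Matrix.toEuclideanLin (φxx t x)).toContinuousLinearMap) x :=
    (toDualCLM n).hasFDerivAt.comp x (hc.hasHessXX t ht x)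
  have hsym := second_derivative_symmetric hf hf''
  have hcomp : ∀ a b : Fin n,
      ⟪(Matrix.toEuclideanLin (φxx t x)) (EuclideanSpace.single a 1), EuclideanSpace.single b 1⟫
        = φxx t x b a := by
    intro a b
    rw [inner_coord]
    have hcoord : ∀ k : Fin n, ((Matrix.toEuclideanLin (φxx t x)) (EuclideanSpace.single a 1)) k
        = φxx t x k a := by
      intro k
      rw [toEuc_apply]
      simp [EuclideanSpace.single_apply]
    have : ∀ k : Fin n, ((Matrix.toEuclideanLin (φxx t x)) (EuclideanSpace.single a 1)) k
        * (EuclideanSpace.single b (1:ℝ)) k = (if k = b then φxx t x k a else 0) := by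
      intro k
      rw [hcoord k, EuclideanSpace.single_apply]
      by_cases hk : k = b <;> simp [hk]
    rw [Finset.sum_congr rfl (fun k _ => this k)]
    simp
  rw [Matrix.IsSymm]
  ext i j
  rw [Matrix.transpose_apply]
  have h := hsym (EuclideanSpace.single j 1) (EuclideanSpace.single i 1)
  simp only [ContinuousLinearMap.comp_apply] at h
  have h1 : toDualCLM n ((Matrix.toEuclideanLin (φxx t x)).toContinuousLinearMap
      (EuclideanSpace.single j 1)) (EuclideanSpace.single i 1) = φxx t x i j := by
    rw [toDualCLM_apply]
    exact hcomp j i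
  have h2 : toDualCLM n ((Matrix.toEuclideanLin (φxx t x)).toContinuousLinearMap
      (EuclideanSpace.single i 1)) (EuclideanSpace.single j 1) = φxx t x j i := by
    rw [toDualCLM_apply]
    exact hcomp i j
  rw [h1, h2] at h
  exact h.symm

lemma taylor_bound {φ φt : ℝ → En n → ℝ} {φx : ℝ → En n → En n}
    {φxx : ℝ → En n → Matrix (Fin n) (Fin n) ℝ} (hc : IsC12 T φ φt φx φxx)
    {t₀ : ℝ} {x₀ : En n} (ht₀ : t₀ ∈ Set.Ico 0 T) {ε : ℝ} (hε : 0 < ε) :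
    ∃ δ > 0, ∀ s (y : En n), s ∈ Set.Icc t₀ T → max |s - t₀| ‖y - x₀‖ < δ →
      φ s y - φ t₀ x₀ - (φt t₀ x₀)*(s-t₀) - ⟪φx t₀ x₀, y-x₀⟫
        - (1/2)*⟪(Matrix.toEuclideanLin (φxx t₀ x₀)) (y-x₀), y-x₀⟫
        ≤ ε*(|s-t₀| + ‖y-x₀‖^2) := by
  have hmem : (t₀, x₀) ∈ Set.Icc (0:ℝ) T ×ˢ (Set.univ : Set (En n)) := ⟨⟨ht₀.1, ht₀.2.le⟩, trivial⟩
  have hcT := hc.contT (t₀, x₀) hmem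
  rw [Metric.continuousWithinAt_iff] at hcT
  obtain ⟨δ₁, hδ₁, hT1⟩ := hcT ε hε
  set A := (Matrix.toEuclideanLin (φxx t₀ x₀)).toContinuousLinearMap with hAdef
  have hMcont : Continuous
      (fun z : En n => (Matrix.toEuclideanLin (φxx t₀ z)).toContinuousLinearMap) := by
    have hxxcont : Continuous (fun z : En n => φxx t₀ z) := by
      have hmap : Continuous (fun z : En n => ((t₀ : ℝ), z)) := by fun_prop
      have h1 : ContinuousOn (fun z : En n => φxx t₀ z) Set.univ := by
        apply ContinuousOn.comp hc.contXX hmap.continuousOn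
        intro z _
        exact ⟨⟨ht₀.1, ht₀.2.le⟩, trivial⟩
      exact continuousOn_univ.mp h1
    let ℓ : Matrix (Fin n) (Fin n) ℝ →ₗ[ℝ] (En n →L[ℝ] En n) :=
      { toFun := fun M => (Matrix.toEuclideanLin M).toContinuousLinearMap,
        map_add' := by intro a b; apply ContinuousLinearMap.ext; intro u; simp,
        map_smul' := by intro m a; apply ContinuousLinearMap.ext; intro u; simp }
    exact (ℓ.continuous_of_finiteDimensional).comp hxxcont
  have hMc := hMcont.continuousAt (x := x₀)
  rw [Metric.continuousAt_iff] at hMc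
  obtain ⟨δ₂, hδ₂, hT2⟩ := hMc ε hε
  refine ⟨min δ₁ δ₂, lt_min hδ₁ hδ₂, ?_⟩
  intro s y hs hdist
  have hτ0 : 0 ≤ s - t₀ := by linarith [hs.1]
  have hτabs : |s - t₀| = s - t₀ := abs_of_nonneg hτ0
  have hτδ₁ : |s - t₀| < δ₁ :=
    lt_of_lt_of_le (lt_of_le_of_lt (le_max_left _ _) hdist) (min_le_left _ _)
  have hvδ₁ : ‖y - x₀‖ < δ₁ :=
    lt_of_lt_of_le (lt_of_le_of_lt (le_max_right _ _) hdist) (min_le_left _ _)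
  have hvδ₂ : ‖y - x₀‖ < δ₂ :=
    lt_of_lt_of_le (lt_of_le_of_lt (le_max_right _ _) hdist) (min_le_right _ _)
  -- time part
  have hE1 : |φ s y - φ t₀ y - (φt t₀ x₀)*(s - t₀)| ≤ ε * |s - t₀| := by
    have hsub : Set.Icc t₀ s ⊆ Set.Icc 0 T := fun u hu =>
      ⟨le_trans ht₀.1 hu.1, le_trans hu.2 hs.2⟩
    have hder : ∀ u ∈ Set.Icc t₀ s, HasDerivWithinAt (fun u' => φ u' y - (φt t₀ x₀)*u')
        (φt u y - φt t₀ x₀) (Set.Icc t₀ s) u := by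
      intro u hu
      have h1 := (hc.hasDerivT u (hsub hu) y).mono hsub
      have h2 : HasDerivWithinAt (fun u' : ℝ => (φt t₀ x₀)*u') (φt t₀ x₀) (Set.Icc t₀ s) u := by
        simpa using ((hasDerivAt_id u).const_mul (φt t₀ x₀)).hasDerivWithinAt
      exact h1.sub h2
    have hbd : ∀ u ∈ Set.Icc t₀ s, ‖φt u y - φt t₀ x₀‖ ≤ ε := by
      intro u hu
      have humem : (u, y) ∈ Set.Icc (0:ℝ) T ×ˢ (Set.univ : Set (En n)) := ⟨hsub hu, trivial⟩
      have hdu : dist (u, y) (t₀, x₀) < δ₁ := by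
        rw [Prod.dist_eq, sup_lt_iff]
        constructor
        · rw [Real.dist_eq]
          have h1 : |u - t₀| ≤ |s - t₀| := by
            rw [abs_of_nonneg (by linarith [hu.1] : (0:ℝ) ≤ u - t₀), hτabs]
            linarith [hu.2]
          exact lt_of_le_of_lt h1 hτδ₁
        · rw [dist_eq_norm]; exact hvδ₁
      have := hT1 humem hdu
      rw [Real.dist_eq] at this
      exact this.le
    have hkey := (convex_Icc t₀ s).norm_image_sub_le_of_norm_hasDerivWithin_le hder hbd
      (Set.left_mem_Icc.mpr (by linarith [hs.1])) (Set.right_mem_Icc.mpr (by linarith [hs.1]))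
    have heq : (φ s y - (φt t₀ x₀)*s) - (φ t₀ y - (φt t₀ x₀)*t₀)
        = φ s y - φ t₀ y - (φt t₀ x₀)*(s - t₀) := by ring
    rw [heq] at hkey
    simpa [Real.norm_eq_abs] using hkey
  -- space part: step 1, gradient increment bound
  have hstep1 : ∀ z : En n, ‖z - x₀‖ < δ₂ →
      ‖φx t₀ z - φx t₀ x₀ - A (z - x₀)‖ ≤ ε * ‖z - x₀‖ := by
    intro z hz
    have hder : ∀ u ∈ Metric.ball x₀ δ₂, HasFDerivWithinAt
        (fun z' => φx t₀ z' - A (z' - x₀))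
        ((Matrix.toEuclideanLin (φxx t₀ u)).toContinuousLinearMap - A) (Metric.ball x₀ δ₂) u := by
      intro u _
      have h1 := (hc.hasHessXX t₀ ⟨ht₀.1, ht₀.2.le⟩ u).hasFDerivWithinAt
        (s := Metric.ball x₀ δ₂)
      have h2 : HasFDerivWithinAt (fun z' : En n => A (z' - x₀)) A (Metric.ball x₀ δ₂) u := by
        have h3 := A.hasFDerivAt.comp u ((hasFDerivAt_id u).sub_const x₀)
        simp only [Function.comp_def, ContinuousLinearMap.comp_id] at h3
        exact h3.hasFDerivWithinAt
      exact h1.sub h2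
    have hbd : ∀ u ∈ Metric.ball x₀ δ₂,
        ‖(Matrix.toEuclideanLin (φxx t₀ u)).toContinuousLinearMap - A‖ ≤ ε := by
      intro u hu
      rw [Metric.mem_ball] at hu
      have := hT2 hu
      rw [dist_eq_norm] at this
      exact this.le
    have hkey := (convex_ball x₀ δ₂).norm_image_sub_le_of_norm_hasFDerivWithin_le hder hbd
      (Metric.mem_ball_self hδ₂) (by rw [Metric.mem_ball, dist_eq_norm]; exact hz)
    have heq : (φx t₀ z - A (z - x₀)) - (φx t₀ x₀ - A (x₀ - x₀))
        = φx t₀ z - φx t₀ x₀ - A (z - x₀) := by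
      rw [sub_self, map_zero, sub_zero]
      abel
    rw [heq] at hkey
    exact hkey
  -- space part: step 2
  have hE2 : |φ t₀ y - φ t₀ x₀ - ⟪φx t₀ x₀, y - x₀⟫ - (1/2)*⟪A (y - x₀), y - x₀⟫|
      ≤ ε * ‖y - x₀‖^2 := by
    set v := y - x₀ with hv
    set G : ℝ → ℝ := fun σ => φ t₀ (x₀ + σ • v) - σ*⟪φx t₀ x₀, v⟫ - σ^2*((1/2)*⟪A v, v⟫)
      with hG
    have hpath : ∀ σ : ℝ, HasDerivAt (fun σ' : ℝ => x₀ + σ' • v) v σ := by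
      intro σ
      simpa using ((hasDerivAt_id σ).smul_const v).const_add x₀
    have hder : ∀ σ ∈ Set.Icc (0:ℝ) 1, HasDerivWithinAt G
        (⟪φx t₀ (x₀ + σ • v) - φx t₀ x₀ - σ • (A v), v⟫) (Set.Icc 0 1) σ := by
      intro σ _
      have h1 : HasDerivAt (fun σ' => φ t₀ (x₀ + σ' • v)) ⟪φx t₀ (x₀ + σ • v), v⟫ σ := by
        have hg := hc.hasGradX t₀ ⟨ht₀.1, ht₀.2.le⟩ (x₀ + σ • v)
        have hfd : HasFDerivAt (φ t₀)
            ((InnerProductSpace.toDual ℝ (En n)) (φx t₀ (x₀ + σ • v))) (x₀ + σ • v) := hg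
        have h1' := hfd.comp_hasDerivAt σ (hpath σ)
        simpa [Function.comp_def, InnerProductSpace.toDual_apply_apply] using h1'
      have h2 : HasDerivAt (fun σ' : ℝ => σ'*⟪φx t₀ x₀, v⟫) ⟪φx t₀ x₀, v⟫ σ := by
        simpa using (hasDerivAt_id σ).mul_const ⟪φx t₀ x₀, v⟫
      have h3 : HasDerivAt (fun σ' : ℝ => σ'^2*((1/2)*⟪A v, v⟫)) (σ*⟪A v, v⟫) σ := by
        have h3' := (hasDerivAt_pow 2 σ).mul_const ((1/2)*⟪A v, v⟫)
        refine h3'.congr_deriv ?_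
        ring
      have htot := (h1.sub h2).sub h3
      have heq : ⟪φx t₀ (x₀ + σ • v) - φx t₀ x₀ - σ • (A v), v⟫
          = ⟪φx t₀ (x₀ + σ • v), v⟫ - ⟪φx t₀ x₀, v⟫ - σ*⟪A v, v⟫ := by
        rw [inner_sub_left, inner_sub_left, real_inner_smul_left]
      rw [heq]
      exact htot.hasDerivWithinAt
    have hbd : ∀ σ ∈ Set.Icc (0:ℝ) 1,
        ‖⟪φx t₀ (x₀ + σ • v) - φx t₀ x₀ - σ • (A v), v⟫‖ ≤ ε*‖v‖^2 := by
      intro σ hσ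
      have heqz : (x₀ + σ • v) - x₀ = σ • v := by abel
      have hz : ‖(x₀ + σ • v) - x₀‖ < δ₂ := by
        rw [heqz, norm_smul]
        calc ‖σ‖*‖v‖ ≤ 1*‖v‖ := by
              apply mul_le_mul_of_nonneg_right _ (norm_nonneg v)
              rw [Real.norm_eq_abs, abs_of_nonneg hσ.1]
              exact hσ.2
          _ < δ₂ := by rw [one_mul]; exact hvδ₂
      have h1 := hstep1 (x₀ + σ • v) hz
      rw [heqz, A.map_smul] at h1
      have hCS := abs_real_inner_le_norm (φx t₀ (x₀ + σ • v) - φx t₀ x₀ - σ • (A v)) v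
      rw [Real.norm_eq_abs]
      calc |⟪φx t₀ (x₀ + σ • v) - φx t₀ x₀ - σ • (A v), v⟫|
          ≤ ‖φx t₀ (x₀ + σ • v) - φx t₀ x₀ - σ • (A v)‖ * ‖v‖ := hCS
        _ ≤ (ε * ‖σ • v‖) * ‖v‖ := by
            apply mul_le_mul_of_nonneg_right h1 (norm_nonneg v)
        _ ≤ ε * ‖v‖^2 := by
            rw [norm_smul]
            have hσ1 : ‖σ‖ ≤ 1 := by
              rw [Real.norm_eq_abs, abs_of_nonneg hσ.1]; exact hσ.2
            have h3 : (0:ℝ) ≤ ε * ‖v‖^2 := by positivity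
            have h4 : ε * (‖σ‖ * ‖v‖) * ‖v‖ = (ε * ‖v‖^2) * ‖σ‖ := by ring
            rw [h4]
            calc (ε * ‖v‖^2) * ‖σ‖ ≤ (ε * ‖v‖^2) * 1 := mul_le_mul_of_nonneg_left hσ1 h3
              _ = ε * ‖v‖^2 := mul_one _
    have hkey := (convex_Icc (0:ℝ) 1).norm_image_sub_le_of_norm_hasDerivWithin_le hder hbd
      (Set.left_mem_Icc.mpr zero_le_one) (Set.right_mem_Icc.mpr zero_le_one)
    have hG1 : G 1 = φ t₀ y - ⟪φx t₀ x₀, v⟫ - (1/2)*⟪A v, v⟫ := by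
      rw [hG]
      simp only [one_smul, one_pow, one_mul]
      rw [hv]
      have : x₀ + (y - x₀) = y := by abel
      rw [this]
    have hG0 : G 0 = φ t₀ x₀ := by
      rw [hG]
      simp
    rw [hG1, hG0] at hkey
    have heq2 : φ t₀ y - ⟪φx t₀ x₀, v⟫ - 1/2*⟪A v, v⟫ - φ t₀ x₀
        = φ t₀ y - φ t₀ x₀ - ⟪φx t₀ x₀, v⟫ - 1/2*⟪A v, v⟫ := by ring
    rw [heq2] at hkey
    have hnorm10 : ‖(1:ℝ) - 0‖ = 1 := by norm_num
    rw [hnorm10, mul_one] at hkey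
    rw [Real.norm_eq_abs] at hkey
    exact hkey
  -- combine
  have hsplit : φ s y - φ t₀ x₀ - (φt t₀ x₀)*(s-t₀) - ⟪φx t₀ x₀, y-x₀⟫
      - (1/2)*⟪A (y-x₀), y-x₀⟫
      = (φ s y - φ t₀ y - (φt t₀ x₀)*(s-t₀))
        + (φ t₀ y - φ t₀ x₀ - ⟪φx t₀ x₀, y-x₀⟫ - (1/2)*⟪A (y-x₀), y-x₀⟫) := by ring
  have hfinal : φ s y - φ t₀ x₀ - (φt t₀ x₀)*(s-t₀) - ⟪φx t₀ x₀, y-x₀⟫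
      - (1/2)*⟪A (y-x₀), y-x₀⟫ ≤ ε*(|s-t₀| + ‖y-x₀‖^2) := by
    rw [hsplit, mul_add]
    have h1 := le_trans (le_abs_self _) hE1
    have h2 := le_trans (le_abs_self _) hE2
    linarith
  exact hfinal
end Backward

end Stmt1Aux

theorem stmt1 (n : ℕ) (hn : 1 ≤ n) (T : ℝ) (hT : 0 < T)
    (w : ℝ → En n → ℝ)
    (hw : ContinuousOn (fun p : ℝ × En n => w p.1 p.2) (Set.Icc 0 T ×ˢ Set.univ))
    (t₀ : ℝ) (x₀ : En n) (ht₀ : t₀ ∈ Set.Ico 0 T)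
    (q : ℝ) (p : En n) (P : Matrix (Fin n) (Fin n) ℝ) :
    (q, p, P) ∈ parabolicSuperdiff T w t₀ x₀ ↔
      ∃ (φ : ℝ → En n → ℝ) (φt : ℝ → En n → ℝ) (φx : ℝ → En n → En n)
        (φxx : ℝ → En n → Matrix (Fin n) (Fin n) ℝ),
        IsC12 T φ φt φx φxx ∧
        (∀ t ∈ Set.Icc t₀ T, ∀ x : En n, (t, x) ≠ (t₀, x₀) → w t x < φ t x) ∧
        φ t₀ x₀ = w t₀ x₀ ∧ φt t₀ x₀ = q ∧ φx t₀ x₀ = p ∧ φxx t₀ x₀ = P := by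
  constructor
  · rintro ⟨hsymm, hls⟩
    have hls' : Filter.limsup
        (fun sy : ℝ × En n => ((parabolicQuot w t₀ x₀ q p P sy : ℝ) : EReal))
        (𝓝[Stmt1Aux.Sreg T t₀ x₀] (t₀, x₀)) ≤ 0 := hls
    have hgood := Stmt1Aux.ωmod_good ht₀.2 ht₀.1 hw hls'
    set f := Stmt1Aux.ωmod T w t₀ x₀ q p P with hfdef
    refine ⟨Stmt1Aux.φc f (w t₀ x₀) t₀ x₀ q p P, Stmt1Aux.φtc f t₀ q, Stmt1Aux.φxc f x₀ p P,
      Stmt1Aux.φxxc f x₀ P, ?_, ?_, ?_, ?_, ?_, ?_⟩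
    · exact {
        cont := (Stmt1Aux.cont_φc hgood).continuousOn
        hasDerivT := fun t _ x => (Stmt1Aux.hasDerivAt_time hgood t x).hasDerivWithinAt
        hasGradX := fun t _ x => Stmt1Aux.hasGradientAt_φc (w t₀ x₀) t₀ x₀ q p P hgood hsymm t x
        hasHessXX := fun t _ x => Stmt1Aux.hasFDerivAt_φxc hgood t x
        contT := (Stmt1Aux.cont_φtc hgood).continuousOn
        contX := (Stmt1Aux.cont_φxc hgood).continuousOn
        contXX := (Stmt1Aux.cont_φxxc hgood).continuousOn }
    · intro t ht x hne
      have hsy : ((t, x) : ℝ × En n) ∈ Stmt1Aux.Sreg T t₀ x₀ :=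
        ⟨⟨ht, trivial⟩, by simpa using hne⟩
      have hq := Stmt1Aux.quot_le_ωmod ht₀.2 ht₀.1 hw hls' hsy
      have hddpos := Stmt1Aux.dd_pos x₀ hsy
      have hτ0 : 0 ≤ t - t₀ := by linarith [ht.1]
      have hρ0 : 0 ≤ Stmt1Aux.ρf x₀ x := Stmt1Aux.rho_nonneg x₀ x
      have hdd : Stmt1Aux.dd t₀ x₀ (t, x) = (t - t₀) + Stmt1Aux.ρf x₀ x := by
        unfold Stmt1Aux.dd Stmt1Aux.ρf
        rw [abs_of_nonneg hτ0]
      rw [← hfdef] at hq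
      have hnum : parabolicQuot w t₀ x₀ q p P (t, x) * Stmt1Aux.dd t₀ x₀ (t, x)
          = w t x - w t₀ x₀ - q*(t-t₀) - ⟪p, x-x₀⟫
            - (1/2)*⟪(Matrix.toEuclideanLin P) (x-x₀), x-x₀⟫ := by
        unfold parabolicQuot
        exact div_mul_cancel₀ _ (ne_of_gt hddpos)
      have hchain : parabolicQuot w t₀ x₀ q p P (t, x) * Stmt1Aux.dd t₀ x₀ (t, x)
          ≤ 2 * Stmt1Aux.hh f (t - t₀) + 2 * Stmt1Aux.hh f (Stmt1Aux.ρf x₀ x) := by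
        calc parabolicQuot w t₀ x₀ q p P (t, x) * Stmt1Aux.dd t₀ x₀ (t, x)
            ≤ f (Stmt1Aux.dd t₀ x₀ (t, x)) * Stmt1Aux.dd t₀ x₀ (t, x) :=
              mul_le_mul_of_nonneg_right hq hddpos.le
          _ = f ((t - t₀) + Stmt1Aux.ρf x₀ x) * ((t - t₀) + Stmt1Aux.ρf x₀ x) := by rw [hdd]
          _ ≤ 2 * Stmt1Aux.hh f (t - t₀) + 2 * Stmt1Aux.hh f (Stmt1Aux.ρf x₀ x) :=
              Stmt1Aux.omega_dom hgood hτ0 hρ0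
      have hstrict : 0 < (t - t₀)^2 + (Stmt1Aux.ρf x₀ x)^2 := by
        rw [hdd] at hddpos
        nlinarith [mul_pos hddpos hddpos, mul_nonneg hτ0 hρ0,
          sq_nonneg (t - t₀ - Stmt1Aux.ρf x₀ x)]
      have hφ : Stmt1Aux.φc f (w t₀ x₀) t₀ x₀ q p P t x
          = w t₀ x₀ + q*(t-t₀) + ⟪p, x-x₀⟫
            + (1/2)*⟪(Matrix.toEuclideanLin P) (x-x₀), x-x₀⟫
            + 2*Stmt1Aux.hh f (t-t₀) + (t-t₀)^2 + 2*Stmt1Aux.hh f (Stmt1Aux.ρf x₀ x)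
            + (Stmt1Aux.ρf x₀ x)^2 := rfl
      rw [hφ]
      linarith [hnum, hchain, hstrict]
    · exact Stmt1Aux.φc_at hgood
    · exact Stmt1Aux.φtc_at hgood
    · exact Stmt1Aux.φxc_at
    · exact Stmt1Aux.φxxc_at hgood
  · rintro ⟨φ, φt, φx, φxx, hc, htouch, hval, hqt, hpx, hPxx⟩
    constructor
    · have := Stmt1Aux.hess_symm hc ⟨ht₀.1, ht₀.2.le⟩ x₀
      rwa [hPxx] at this
    · apply Stmt1Aux.limsup_nonpos_of_eps
      intro ε hε
      obtain ⟨δ, hδ, hbd⟩ := Stmt1Aux.taylor_bound hc ht₀ hε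
      rw [eventually_nhdsWithin_iff, Metric.eventually_nhds_iff]
      refine ⟨δ, hδ, fun sy hdist hsy => ?_⟩
      obtain ⟨hmem, hne⟩ := hsy
      have hsmem : sy.1 ∈ Set.Icc t₀ T := hmem.1
      have hne' : (sy.1, sy.2) ≠ (t₀, x₀) := by simpa using hne
      have hddpos : 0 < |sy.1 - t₀| + ‖sy.2 - x₀‖^2 :=
        Stmt1Aux.dd_pos x₀ (⟨hmem, hne⟩ : sy ∈ Stmt1Aux.Sreg T t₀ x₀)
      have hwle : w sy.1 sy.2 ≤ φ sy.1 sy.2 := (htouch sy.1 hsmem sy.2 hne').le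
      have hmax : max |sy.1 - t₀| ‖sy.2 - x₀‖ < δ := by
        rw [Prod.dist_eq, Real.dist_eq, dist_eq_norm] at hdist
        exact hdist
      have htb := hbd sy.1 sy.2 hsmem hmax
      rw [hqt, hpx, hPxx] at htb
      unfold parabolicQuot
      rw [div_le_iff₀ hddpos]
      have hφval : φ t₀ x₀ = w t₀ x₀ := hval
      have hle2 : w sy.1 sy.2 - w t₀ x₀ - q * (sy.1 - t₀) - ⟪p, sy.2 - x₀⟫
          - (1/2)*⟪(Matrix.toEuclideanLin P) (sy.2 - x₀), sy.2 - x₀⟫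
          ≤ φ sy.1 sy.2 - φ t₀ x₀ - q * (sy.1 - t₀) - ⟪p, sy.2 - x₀⟫
          - (1/2)*⟪(Matrix.toEuclideanLin P) (sy.2 - x₀), sy.2 - x₀⟫ := by
        rw [hφval]
        linarith
      exact le_trans hle2 htb


end
end

section
/- Let n ≥ 1, let w : ℝⁿ → ℝ and let C ≥ 0 be such that the function x ↦ w(x) − C|x|² is concave on ℝⁿ. Fix x₀ ∈ ℝⁿ and p ∈ ℝⁿ such that limsup_{y→x₀} [w(y) − w(x₀) − ⟨p, y − x₀⟩]/|y − x₀| ≤ 0. Then for every y ∈ ℝⁿ, w(y) ≤ w(x₀) + ⟨p, y − x₀⟩ + C|y − x₀|². -/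
open Filter Topology Set
open scoped RealInnerProductSpace

noncomputable section

theorem stmt4 (n : ℕ) (hn : 1 ≤ n) (w : En n → ℝ) (C : ℝ) (hC : 0 ≤ C)
    (hconc : ConcaveOn ℝ Set.univ (fun x : En n => w x - C * ‖x‖ ^ 2))
    (x₀ p : En n)
    (hsup : Filter.limsup
        (fun y : En n => (((w y - w x₀ - ⟪p, y - x₀⟫) / ‖y - x₀‖ : ℝ) : EReal))
        (𝓝[≠] x₀) ≤ 0) :
    ∀ y : En n, w y ≤ w x₀ + ⟪p, y - x₀⟫ + C * ‖y - x₀‖ ^ 2 := by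
  intro y
  rcases eq_or_ne y x₀ with rfl | hy
  · simp
  have hny : (0:ℝ) < ‖y - x₀‖ := by
    rw [norm_pos_iff]
    exact sub_ne_zero.mpr hy
  have key : ∀ ε : ℝ, 0 < ε → w y ≤ w x₀ + ⟪p, y - x₀⟫ + C * ‖y - x₀‖ ^ 2 + ε := by
    intro ε hε
    set δ := ε / ‖y - x₀‖ with hδdef
    have hδpos : 0 < δ := div_pos hε hny
    have hδb : δ * ‖y - x₀‖ = ε := div_mul_cancel₀ ε (ne_of_gt hny)
    have hlt : Filter.limsup
        (fun z : En n => (((w z - w x₀ - ⟪p, z - x₀⟫) / ‖z - x₀‖ : ℝ) : EReal))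
        (𝓝[≠] x₀) < (δ : EReal) :=
      lt_of_le_of_lt hsup (by exact_mod_cast hδpos)
    have hev := Filter.eventually_lt_of_limsup_lt hlt
    have hev' : ∀ᶠ z in 𝓝[≠] x₀, w z - w x₀ - ⟪p, z - x₀⟫ ≤ δ * ‖z - x₀‖ := by
      filter_upwards [hev, self_mem_nhdsWithin] with z hz hz'
      have hz0 : z ≠ x₀ := hz'
      have hnz : (0:ℝ) < ‖z - x₀‖ := by
        rw [norm_pos_iff]; exact sub_ne_zero.mpr hz0
      have hq : (w z - w x₀ - ⟪p, z - x₀⟫) / ‖z - x₀‖ < δ := by exact_mod_cast hz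
      have := (div_lt_iff₀ hnz).mp hq
      linarith
    -- the curve t ↦ x₀ + t • (y - x₀)
    have htend0 : Tendsto (fun t : ℝ => x₀ + t • (y - x₀)) (𝓝[>] (0:ℝ)) (𝓝 x₀) := by
      have hc : Continuous fun t : ℝ => x₀ + t • (y - x₀) := by continuity
      have h0 := hc.tendsto 0
      simp only [zero_smul, add_zero] at h0
      exact h0.mono_left nhdsWithin_le_nhds
    have htend : Tendsto (fun t : ℝ => x₀ + t • (y - x₀)) (𝓝[>] (0:ℝ)) (𝓝[≠] x₀) := by
      rw [tendsto_nhdsWithin_iff]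
      refine ⟨htend0, ?_⟩
      filter_upwards [self_mem_nhdsWithin] with t ht
      simp only [Set.mem_compl_iff, Set.mem_singleton_iff]
      intro h
      have : t • (y - x₀) = 0 := by
        have h2 := congrArg (fun z => z - x₀) h
        simpa using h2
      rcases smul_eq_zero.mp this with h1 | h2
      · exact absurd h1 (ne_of_gt ht)
      · exact absurd h2 (sub_ne_zero.mpr hy)
    have hIoo : ∀ᶠ t : ℝ in 𝓝[>] (0:ℝ), t ∈ Set.Ioo (0:ℝ) 1 :=
      Ioo_mem_nhdsGT_of_mem (by constructor <;> norm_num)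
    obtain ⟨t, hineq, ht0, ht1⟩ := ((htend.eventually hev').and hIoo).exists
    set xt := x₀ + t • (y - x₀) with hxt
    have hxtsub : xt - x₀ = t • (y - x₀) := by simp [hxt]
    have hinnerxt : ⟪p, xt - x₀⟫ = t * ⟪p, y - x₀⟫ := by
      rw [hxtsub, real_inner_smul_right]
    have hnormxt : ‖xt - x₀‖ = t * ‖y - x₀‖ := by
      rw [hxtsub, norm_smul, Real.norm_eq_abs, abs_of_pos ht0]
    -- concavity at the convex combination
    have hcomb : (1 - t) • x₀ + t • y = xt := by
      rw [hxt]
      module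
    have hconc' := hconc.2 (Set.mem_univ x₀) (Set.mem_univ y)
      (show (0:ℝ) ≤ 1 - t by linarith) (le_of_lt ht0) (by ring : (1 - t) + t = 1)
    rw [hcomb] at hconc'
    -- norm expansions
    have hnxt : ‖xt‖ ^ 2 = ‖x₀‖ ^ 2 + 2 * (t * ⟪x₀, y - x₀⟫) + t ^ 2 * ‖y - x₀‖ ^ 2 := by
      rw [hxt, norm_add_sq_real, real_inner_smul_right, norm_smul, Real.norm_eq_abs,
        abs_of_pos ht0, mul_pow]
    have hny2 : ‖y‖ ^ 2 = ‖x₀‖ ^ 2 + 2 * ⟪x₀, y - x₀⟫ + ‖y - x₀‖ ^ 2 := by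
      have h := norm_add_sq_real x₀ (y - x₀)
      rw [add_sub_cancel] at h
      linarith
    have hb2 : ‖y - x₀‖ ^ 2 ≥ 0 := sq_nonneg _
    have hwxt : w xt - w x₀ - t * ⟪p, y - x₀⟫ ≤ δ * (t * ‖y - x₀‖) := by
      rw [← hinnerxt, ← hnormxt]; exact hineq
    have hwxt' : w xt - w x₀ - t * ⟪p, y - x₀⟫ ≤ t * ε := by
      rw [show δ * (t * ‖y - x₀‖) = t * (δ * ‖y - x₀‖) by ring, hδb] at hwxt
      exact hwxt
    -- main arithmetic
    simp only [smul_eq_mul] at hconc'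
    rw [hnxt, hny2] at hconc'
    have ht : 0 < t := ht0
    nlinarith [hconc', hwxt', ht, hb2,
      mul_nonneg hC (sq_nonneg (t * ‖y - x₀‖)),
      mul_nonneg hC (mul_nonneg (le_of_lt ht) hb2)]
  exact le_of_forall_pos_le_add key

end
end

section
/- Let n ≥ 1, T > 0, δ ∈ (0,T), and let w : [0,T] × ℝⁿ → ℝ be continuous and satisfy: (D1) there is C₁ > 0 such that |w(t,x) − w(t',x)| ≤ C₁(1 + |x|)|t − t'| for all t, t' ∈ [0, T − δ] and all x ∈ ℝⁿ; (D2) there is C₂ > 0 such that for every t ∈ [0, T − δ] the function x ↦ w(t,x) − C₂|x|² is concave on ℝⁿ. Let t₀ ∈ [0, T − δ), x₀ ∈ ℝⁿ, and (q,p,P) ∈ D^{1,2,+}_{t+,x} w(t₀,x₀). Then for every s ∈ [0, T − δ] and every y ∈ ℝⁿ, w(s,y) − w(t₀,x₀) ≤ C₁(1 + |y|)|s − t₀| + ⟨p, y − x₀⟩ + C₂|y − x₀|². -/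
open Filter Topology Set
open scoped RealInnerProductSpace

noncomputable section

theorem stmt6 (n : ℕ) (hn : 1 ≤ n) (T δ : ℝ) (hT : 0 < T) (hδ : δ ∈ Set.Ioo 0 T)
    (w : ℝ → En n → ℝ)
    (hw : ContinuousOn (fun p : ℝ × En n => w p.1 p.2) (Set.Icc 0 T ×ˢ Set.univ))
    (C₁ C₂ : ℝ) (hC₁ : 0 < C₁) (hC₂ : 0 < C₂)
    (hD1 : ∀ t ∈ Set.Icc 0 (T - δ), ∀ t' ∈ Set.Icc 0 (T - δ), ∀ x : En n,
      |w t x - w t' x| ≤ C₁ * (1 + ‖x‖) * |t - t'|)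
    (hD2 : ∀ t ∈ Set.Icc 0 (T - δ),
      ConcaveOn ℝ Set.univ (fun x : En n => w t x - C₂ * ‖x‖ ^ 2))
    (t₀ : ℝ) (ht₀ : t₀ ∈ Set.Ico 0 (T - δ)) (x₀ : En n)
    (q : ℝ) (p : En n) (P : Matrix (Fin n) (Fin n) ℝ)
    (hmem : (q, p, P) ∈ parabolicSuperdiff T w t₀ x₀) :
    ∀ s ∈ Set.Icc 0 (T - δ), ∀ y : En n,
      w s y - w t₀ x₀ ≤ C₁ * (1 + ‖y‖) * |s - t₀| + ⟪p, y - x₀⟫ + C₂ * ‖y - x₀‖ ^ 2 := by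
  have htT : t₀ < T := lt_trans ht₀.2 (by linarith [hδ.1])
  obtain ⟨hsymm, hls⟩ := hmem
  have key : ∀ y : En n, w t₀ y - w t₀ x₀ ≤ ⟪p, y - x₀⟫ + C₂ * ‖y - x₀‖ ^ 2 := by
    intro y
    by_cases hy : y = x₀
    · simp [hy]
    have hne : y - x₀ ≠ 0 := sub_ne_zero.mpr hy
    set h : En n := y - x₀ with hh
    have hnorm : (0:ℝ) < ‖h‖ := norm_pos_iff.mpr hne
    -- eventual inequality from limsup
    have hev : ∀ᶠ sy in 𝓝[(Set.Icc t₀ T ×ˢ (Set.univ : Set (En n))) \ {(t₀, x₀)}] (t₀, x₀),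
        parabolicQuot w t₀ x₀ q p P sy < 1 := by
      have h1 : Filter.limsup
          (fun sy : ℝ × En n => ((parabolicQuot w t₀ x₀ q p P sy : ℝ) : EReal))
          (𝓝[(Set.Icc t₀ T ×ˢ (Set.univ : Set (En n))) \ {(t₀, x₀)}] (t₀, x₀))
          < ((1:ℝ) : EReal) := lt_of_le_of_lt hls (by norm_num)
      filter_upwards [Filter.eventually_lt_of_limsup_lt h1] with sy hsy
      exact_mod_cast hsy
    -- the path lam ↦ (t₀, x₀ + lam • h)
    have hpath : Filter.Tendsto (fun lam : ℝ => ((t₀, x₀ + lam • h) : ℝ × En n)) (𝓝[>] (0:ℝ))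
        (𝓝[(Set.Icc t₀ T ×ˢ (Set.univ : Set (En n))) \ {(t₀, x₀)}] (t₀, x₀)) := by
      apply tendsto_nhdsWithin_of_tendsto_nhds_of_eventually_within
      · have hc : Continuous (fun lam : ℝ => ((t₀, x₀ + lam • h) : ℝ × En n)) := by
          continuity
        have := hc.tendsto 0
        simpa using this.mono_left nhdsWithin_le_nhds
      · filter_upwards [self_mem_nhdsWithin] with lam (hlam : lam ∈ Set.Ioi (0:ℝ))
        refine ⟨⟨⟨le_refl t₀, le_of_lt htT⟩, trivial⟩, ?_⟩
        simp only [Set.mem_singleton_iff, Prod.mk.injEq, not_and]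
        intro _ hcontra
        have hz : lam • h = 0 := by rwa [add_eq_left] at hcontra
        rcases smul_eq_zero.mp hz with h1 | h2
        · exact absurd h1 (ne_of_gt hlam)
        · exact hne h2
    have hev2 : ∀ᶠ lam in 𝓝[>] (0:ℝ),
        parabolicQuot w t₀ x₀ q p P (t₀, x₀ + lam • h) < 1 := hpath.eventually hev
    have hmain : ∀ᶠ lam in 𝓝[>] (0:ℝ),
        (w t₀ y - C₂ * ‖y‖ ^ 2) - (w t₀ x₀ - C₂ * ‖x₀‖ ^ 2) - ⟪p, h⟫ + 2 * C₂ * ⟪x₀, h⟫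
          ≤ lam * (⟪(Matrix.toEuclideanLin P) h, h⟫ / 2 + ‖h‖ ^ 2) := by
      have hIoo : Set.Ioo (0:ℝ) 1 ∈ 𝓝[>] (0:ℝ) :=
        Ioo_mem_nhdsGT_of_mem ⟨le_refl 0, zero_lt_one⟩
      filter_upwards [hev2, hIoo] with lam hq hlam
      obtain ⟨hl0, hl1⟩ := hlam
      have hden : |(t₀:ℝ) - t₀| + ‖(x₀ + lam • h) - x₀‖ ^ 2 = lam ^ 2 * ‖h‖ ^ 2 := by
        simp [norm_smul, abs_of_pos hl0, mul_pow]
      have hdenpos : (0:ℝ) < lam ^ 2 * ‖h‖ ^ 2 := by positivity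
      rw [parabolicQuot] at hq
      simp only at hq
      rw [hden] at hq
      have hnum := (div_lt_one hdenpos).mp hq
      have hsub : (x₀ + lam • h) - x₀ = lam • h := by abel
      rw [hsub] at hnum
      have hinner1 : ⟪p, lam • h⟫ = lam * ⟪p, h⟫ := real_inner_smul_right p h lam
      have hinner2 : ⟪(Matrix.toEuclideanLin P) (lam • h), lam • h⟫
          = lam ^ 2 * ⟪(Matrix.toEuclideanLin P) h, h⟫ := by
        rw [map_smul, real_inner_smul_left, real_inner_smul_right]
        ring
      rw [hinner1, hinner2, sub_self, mul_zero] at hnum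
      -- concavity
      have hcomb := (hD2 t₀ ⟨ht₀.1, le_of_lt ht₀.2⟩).2 (Set.mem_univ y) (Set.mem_univ x₀)
        (le_of_lt hl0) (by linarith : (0:ℝ) ≤ 1 - lam) (by ring)
      have hpt : lam • y + (1 - lam) • x₀ = x₀ + lam • h := by
        rw [hh]; module
      rw [hpt] at hcomb
      have hcomb' : lam * (w t₀ y - C₂ * ‖y‖ ^ 2) + (1 - lam) * (w t₀ x₀ - C₂ * ‖x₀‖ ^ 2)
          ≤ w t₀ (x₀ + lam • h) - C₂ * ‖x₀ + lam • h‖ ^ 2 := by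
        simpa [smul_eq_mul] using hcomb
      have hexp : ‖x₀ + lam • h‖ ^ 2 = ‖x₀‖ ^ 2 + 2 * lam * ⟪x₀, h⟫ + lam ^ 2 * ‖h‖ ^ 2 := by
        rw [norm_add_sq_real, real_inner_smul_right, norm_smul, Real.norm_eq_abs,
          abs_of_pos hl0]
        ring
      rw [hexp] at hcomb'
      -- combine and divide by lam
      have h4 : lam * ((w t₀ y - C₂ * ‖y‖ ^ 2) - (w t₀ x₀ - C₂ * ‖x₀‖ ^ 2) - ⟪p, h⟫
            + 2 * C₂ * ⟪x₀, h⟫)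
          ≤ lam * (lam * (⟪(Matrix.toEuclideanLin P) h, h⟫ / 2 + ‖h‖ ^ 2)) := by
        have hpos : (0:ℝ) ≤ C₂ * (lam ^ 2 * ‖h‖ ^ 2) := by positivity
        linarith [hcomb', hnum, hpos]
      exact le_of_mul_le_mul_left h4 hl0
    have htend : Filter.Tendsto
        (fun lam : ℝ => lam * (⟪(Matrix.toEuclideanLin P) h, h⟫ / 2 + ‖h‖ ^ 2))
        (𝓝[>] (0:ℝ)) (𝓝 0) := by
      have h5 : Filter.Tendsto
          (fun lam : ℝ => lam * (⟪(Matrix.toEuclideanLin P) h, h⟫ / 2 + ‖h‖ ^ 2))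
          (𝓝 (0:ℝ)) (𝓝 0) := by
        have h6 := (continuous_mul_right
          (⟪(Matrix.toEuclideanLin P) h, h⟫ / 2 + ‖h‖ ^ 2)).tendsto 0
        rw [zero_mul] at h6
        exact h6
      exact h5.mono_left nhdsWithin_le_nhds
    have hc0 : (w t₀ y - C₂ * ‖y‖ ^ 2) - (w t₀ x₀ - C₂ * ‖x₀‖ ^ 2) - ⟪p, h⟫
        + 2 * C₂ * ⟪x₀, h⟫ ≤ 0 := ge_of_tendsto htend hmain
    have hy2 : ‖y‖ ^ 2 = ‖x₀‖ ^ 2 + 2 * ⟪x₀, h⟫ + ‖h‖ ^ 2 := by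
      have hyx : y = x₀ + h := by rw [hh]; abel
      rw [hyx, norm_add_sq_real]
    nlinarith [hc0, hy2]
  intro s hs y
  have ht₀' : t₀ ∈ Set.Icc 0 (T - δ) := ⟨ht₀.1, le_of_lt ht₀.2⟩
  have h1 : w s y - w t₀ y ≤ C₁ * (1 + ‖y‖) * |s - t₀| := by
    have := hD1 s hs t₀ ht₀' y
    exact (abs_le.mp this).2
  have h2 := key y
  linarith

end
end
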